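/- arXiv:2407.10516 — 2 statements merged into one kernel-verified Lean document; each statement's English description precedes it below -/
import Mathlib

section
/- Let d ≥ 1, t > 1 and ν₀, ν₁, μ ∈ P₂(ℝ^d). Then F_t(ν₀,ν₁;μ) ≥ −W₂²(ν₀,ν₁)/2, i.e. W₂²(μ,ν₁)/(2(t−1)) − W₂²(μ,ν₀)/(2t) ≥ −W₂²(ν₀,ν₁)/2. -/
open MeasureTheory
open scoped ENNReal

noncomputable section

abbrev EucSp (d : ℕ) := EuclideanSpace ℝ (Fin d)

/-- `γ` is a coupling of `μ` and `ν`. -/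
def IsCoupling {d : ℕ} (γ : Measure (EucSp d × EucSp d)) (μ ν : Measure (EucSp d)) : Prop :=
  γ.map Prod.fst = μ ∧ γ.map Prod.snd = ν

/-- Probability measures on `ℝ^d` with finite second moment. -/
def P2 (d : ℕ) : Set (Measure (EucSp d)) :=
  {μ | IsProbabilityMeasure μ ∧ Integrable (fun x => ‖x‖ ^ 2) μ}

/-- Squared Wasserstein distance. -/
noncomputable def W2sq {d : ℕ} (μ ν : Measure (EucSp d)) : ℝ :=
  sInf {r | ∃ γ : Measure (EucSp d × EucSp d), IsProbabilityMeasure γ ∧ IsCoupling γ μ ν ∧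
      r = ∫ p, ‖p.1 - p.2‖ ^ 2 ∂γ}

/-- Wasserstein distance. -/
noncomputable def W2 {d : ℕ} (μ ν : Measure (EucSp d)) : ℝ := Real.sqrt (W2sq μ ν)

/-- Metric extrapolation functional. -/
noncomputable def Ft {d : ℕ} (t : ℝ) (ν₀ ν₁ μ : Measure (EucSp d)) : ℝ :=
  W2sq μ ν₁ / (2 * (t - 1)) - W2sq μ ν₀ / (2 * t)

/-- `μ` minimizes the metric extrapolation functional over `P2 d`. -/
def IsExtrapolation {d : ℕ} (t : ℝ) (ν₀ ν₁ μ : Measure (EucSp d)) : Prop :=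
  μ ∈ P2 d ∧ ∀ ρ ∈ P2 d, Ft t ν₀ ν₁ μ ≤ Ft t ν₀ ν₁ ρ

end

section Aux
open ProbabilityTheory

variable {d : ℕ}

lemma costMeas : Measurable (fun p : EucSp d × EucSp d => ‖p.1 - p.2‖ ^ 2) :=
  ((continuous_fst.sub continuous_snd).norm.pow 2).measurable

lemma cost_integrable {μ ν : Measure (EucSp d)} (hμ : μ ∈ P2 d) (hν : ν ∈ P2 d)
    {γ : Measure (EucSp d × EucSp d)} (hγp : IsProbabilityMeasure γ) (hγ : IsCoupling γ μ ν) :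
    Integrable (fun p : EucSp d × EucSp d => ‖p.1 - p.2‖ ^ 2) γ := by
  have hm : AEStronglyMeasurable (fun x : EucSp d => ‖x‖ ^ 2) (γ.map Prod.fst) :=
    (continuous_norm.pow 2).aestronglyMeasurable
  have h1 : Integrable (fun p : EucSp d × EucSp d => ‖p.1‖ ^ 2) γ := by
    have := hμ.2
    rw [← hγ.1] at this
    exact (integrable_map_measure hm measurable_fst.aemeasurable).mp this
  have hm2 : AEStronglyMeasurable (fun x : EucSp d => ‖x‖ ^ 2) (γ.map Prod.snd) :=
    (continuous_norm.pow 2).aestronglyMeasurable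
  have h2 : Integrable (fun p : EucSp d × EucSp d => ‖p.2‖ ^ 2) γ := by
    have := hν.2
    rw [← hγ.2] at this
    exact (integrable_map_measure hm2 measurable_snd.aemeasurable).mp this
  refine Integrable.mono' ((h1.const_mul 2).add (h2.const_mul 2))
    costMeas.aestronglyMeasurable (Filter.Eventually.of_forall fun p => ?_)
  have htri : ‖p.1 - p.2‖ ≤ ‖p.1‖ + ‖p.2‖ := norm_sub_le _ _
  have h0 : (0:ℝ) ≤ ‖p.1 - p.2‖ := norm_nonneg _
  rw [Real.norm_of_nonneg (by positivity)]
  simp only [Pi.add_apply]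
  nlinarith [mul_self_le_mul_self h0 htri, sq_nonneg (‖p.1‖ - ‖p.2‖)]

lemma W2sqSet_nonempty {μ ν : Measure (EucSp d)} (hμ : μ ∈ P2 d) (hν : ν ∈ P2 d) :
    (∫ p, ‖p.1 - p.2‖ ^ 2 ∂(μ.prod ν)) ∈
      {r | ∃ γ : Measure (EucSp d × EucSp d), IsProbabilityMeasure γ ∧ IsCoupling γ μ ν ∧
        r = ∫ p, ‖p.1 - p.2‖ ^ 2 ∂γ} := by
  haveI := hμ.1; haveI := hν.1
  exact ⟨μ.prod ν, inferInstance, ⟨Measure.fst_prod, Measure.snd_prod⟩, rfl⟩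

lemma W2sqSet_bddBelow (μ ν : Measure (EucSp d)) :
    BddBelow {r | ∃ γ : Measure (EucSp d × EucSp d), IsProbabilityMeasure γ ∧ IsCoupling γ μ ν ∧
        r = ∫ p, ‖p.1 - p.2‖ ^ 2 ∂γ} := by
  refine ⟨0, fun r hr => ?_⟩
  obtain ⟨γ, _, _, rfl⟩ := hr
  exact integral_nonneg fun p => by positivity

end Aux

section Glue
open ProbabilityTheory
open scoped ProbabilityTheory

variable {d : ℕ}

lemma ptwise {ε a b c : ℝ} (hε : 0 < ε) (ha : 0 ≤ a) (hb : 0 ≤ b) (hc : 0 ≤ c)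
    (h : c ≤ a + b) : c ^ 2 ≤ (1 + ε) * a ^ 2 + (1 + 1/ε) * b ^ 2 := by
  have h1 : c ^ 2 ≤ (a + b) ^ 2 := by nlinarith
  have h3 : 0 ≤ (ε * a - b) ^ 2 / ε := div_nonneg (sq_nonneg _) hε.le
  have h4 : (ε * a - b) ^ 2 / ε = ε * a ^ 2 - 2 * a * b + (1/ε) * b ^ 2 := by
    field_simp; ring
  nlinarith [h4 ▸ h3]

lemma map_compProd_prod_fst {μ : Measure (EucSp d)} [IsProbabilityMeasure μ]
    (κ₁ κ₂ : Kernel (EucSp d) (EucSp d)) [IsMarkovKernel κ₁] [IsMarkovKernel κ₂] :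
    (μ ⊗ₘ (κ₁ ×ₖ κ₂)).map (fun p => (p.1, p.2.1)) = μ ⊗ₘ κ₁ := by
  have hmg : Measurable (fun p : EucSp d × (EucSp d × EucSp d) => (p.1, p.2.1)) :=
    measurable_fst.prodMk measurable_snd.fst
  ext s hs
  rw [Measure.map_apply hmg hs, Measure.compProd_apply (hs.preimage hmg),
    Measure.compProd_apply hs]
  refine lintegral_congr fun a => ?_
  have hB : MeasurableSet (Prod.mk a ⁻¹' s) := measurable_prodMk_left hs
  have hpre : Prod.mk a ⁻¹' ((fun p : EucSp d × (EucSp d × EucSp d) => (p.1, p.2.1)) ⁻¹' s)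
      = {p : EucSp d × EucSp d | p.1 ∈ Prod.mk a ⁻¹' s} := rfl
  rw [hpre, ← Kernel.fst_apply' _ _ hB, Kernel.fst_prod]

lemma map_compProd_prod_snd {μ : Measure (EucSp d)} [IsProbabilityMeasure μ]
    (κ₁ κ₂ : Kernel (EucSp d) (EucSp d)) [IsMarkovKernel κ₁] [IsMarkovKernel κ₂] :
    (μ ⊗ₘ (κ₁ ×ₖ κ₂)).map (fun p => (p.1, p.2.2)) = μ ⊗ₘ κ₂ := by
  have hmg : Measurable (fun p : EucSp d × (EucSp d × EucSp d) => (p.1, p.2.2)) :=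
    measurable_fst.prodMk measurable_snd.snd
  ext s hs
  rw [Measure.map_apply hmg hs, Measure.compProd_apply (hs.preimage hmg),
    Measure.compProd_apply hs]
  refine lintegral_congr fun a => ?_
  have hB : MeasurableSet (Prod.mk a ⁻¹' s) := measurable_prodMk_left hs
  have hpre : Prod.mk a ⁻¹' ((fun p : EucSp d × (EucSp d × EucSp d) => (p.1, p.2.2)) ⁻¹' s)
      = {p : EucSp d × EucSp d | p.2 ∈ Prod.mk a ⁻¹' s} := rfl
  rw [hpre, show {p : EucSp d × EucSp d | p.2 ∈ Prod.mk a ⁻¹' s} = Prod.snd ⁻¹' (Prod.mk a ⁻¹' s) from rfl,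
    ← Kernel.snd_apply' _ _ hB, Kernel.snd_prod]

end Glue

section Glue2
open ProbabilityTheory
open scoped ProbabilityTheory

variable {d : ℕ}

lemma glue_bound {μ ν₁ ν₀ : Measure (EucSp d)}
    (hμ : μ ∈ P2 d) (h1 : ν₁ ∈ P2 d) (h0 : ν₀ ∈ P2 d)
    {γ₁ γ₂ : Measure (EucSp d × EucSp d)}
    (h₁p : IsProbabilityMeasure γ₁) (h₂p : IsProbabilityMeasure γ₂)
    (h₁ : IsCoupling γ₁ μ ν₁) (h₂ : IsCoupling γ₂ ν₁ ν₀)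
    {ε : ℝ} (hε : 0 < ε) :
    W2sq μ ν₀ ≤ (1 + ε) * ∫ p, ‖p.1 - p.2‖ ^ 2 ∂γ₁ + (1 + 1/ε) * ∫ p, ‖p.1 - p.2‖ ^ 2 ∂γ₂ := by
  haveI := hμ.1; haveI := h1.1; haveI := h0.1; haveI := h₁p; haveI := h₂p
  set s₁ : Measure (EucSp d × EucSp d) := γ₁.map Prod.swap with hs₁def
  haveI : IsProbabilityMeasure s₁ := Measure.isProbabilityMeasure_map measurable_swap.aemeasurable
  have hs₁fst : s₁.map Prod.fst = ν₁ := by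
    rw [hs₁def, Measure.map_map measurable_fst measurable_swap]; exact h₁.2
  have hs₁snd : s₁.map Prod.snd = μ := by
    rw [hs₁def, Measure.map_map measurable_snd measurable_swap]; exact h₁.1
  set η : Measure (EucSp d × (EucSp d × EucSp d)) :=
    ν₁ ⊗ₘ (s₁.condKernel ×ₖ γ₂.condKernel) with hηdef
  haveI : IsProbabilityMeasure η := by rw [hηdef]; infer_instance
  have hmg₁ : Measurable (fun p : EucSp d × (EucSp d × EucSp d) => (p.1, p.2.1)) :=
    measurable_fst.prodMk measurable_snd.fst
  have hmg₂ : Measurable (fun p : EucSp d × (EucSp d × EucSp d) => (p.1, p.2.2)) :=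
    measurable_fst.prodMk measurable_snd.snd
  have hη₁ : η.map (fun p => (p.1, p.2.1)) = s₁ := by
    rw [hηdef, map_compProd_prod_fst]
    have hf : ν₁ = s₁.fst := hs₁fst.symm
    rw [hf, Measure.disintegrate]
  have hη₂ : η.map (fun p => (p.1, p.2.2)) = γ₂ := by
    rw [hηdef, map_compProd_prod_snd]
    have hf : ν₁ = γ₂.fst := h₂.1.symm
    rw [hf, Measure.disintegrate]
  have hγfst : (η.map Prod.snd).map Prod.fst = μ := by
    rw [Measure.map_map measurable_fst measurable_snd]
    show η.map (fun p => p.2.1) = μ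
    have he : (fun p : EucSp d × (EucSp d × EucSp d) => p.2.1)
        = Prod.snd ∘ (fun p => (p.1, p.2.1)) := rfl
    rw [he, ← Measure.map_map measurable_snd hmg₁, hη₁, hs₁snd]
  have hγsnd : (η.map Prod.snd).map Prod.snd = ν₀ := by
    rw [Measure.map_map measurable_snd measurable_snd]
    show η.map (fun p => p.2.2) = ν₀
    have he : (fun p : EucSp d × (EucSp d × EucSp d) => p.2.2)
        = Prod.snd ∘ (fun p => (p.1, p.2.2)) := rfl
    rw [he, ← Measure.map_map measurable_snd hmg₂, hη₂, h₂.2]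
  haveI : IsProbabilityMeasure (η.map Prod.snd) :=
    Measure.isProbabilityMeasure_map measurable_snd.aemeasurable
  have hint₁s : Integrable (fun q : EucSp d × EucSp d => ‖q.1 - q.2‖ ^ 2) s₁ :=
    cost_integrable h1 hμ inferInstance ⟨hs₁fst, hs₁snd⟩
  have hint₂ : Integrable (fun q : EucSp d × EucSp d => ‖q.1 - q.2‖ ^ 2) γ₂ :=
    cost_integrable h1 h0 h₂p h₂
  have hintA : Integrable (fun p : EucSp d × (EucSp d × EucSp d) => ‖p.1 - p.2.1‖ ^ 2) η := by
    have h' : Integrable (fun q : EucSp d × EucSp d => ‖q.1 - q.2‖ ^ 2)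
        (η.map (fun p => (p.1, p.2.1))) := by rwa [hη₁]
    exact (integrable_map_measure costMeas.aestronglyMeasurable hmg₁.aemeasurable).mp h'
  have hintB : Integrable (fun p : EucSp d × (EucSp d × EucSp d) => ‖p.1 - p.2.2‖ ^ 2) η := by
    have h' : Integrable (fun q : EucSp d × EucSp d => ‖q.1 - q.2‖ ^ 2)
        (η.map (fun p => (p.1, p.2.2))) := by rwa [hη₂]
    exact (integrable_map_measure costMeas.aestronglyMeasurable hmg₂.aemeasurable).mp h'
  have hA : ∫ p : EucSp d × (EucSp d × EucSp d), ‖p.1 - p.2.1‖ ^ 2 ∂η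
      = ∫ p, ‖p.1 - p.2‖ ^ 2 ∂γ₁ := by
    calc ∫ p : EucSp d × (EucSp d × EucSp d), ‖p.1 - p.2.1‖ ^ 2 ∂η
        = ∫ q : EucSp d × EucSp d, ‖q.1 - q.2‖ ^ 2 ∂s₁ := by
          rw [← hη₁]
          exact (integral_map hmg₁.aemeasurable costMeas.aestronglyMeasurable).symm
      _ = ∫ p : EucSp d × EucSp d, ‖p.2 - p.1‖ ^ 2 ∂γ₁ := by
          rw [hs₁def]
          exact integral_map measurable_swap.aemeasurable costMeas.aestronglyMeasurable
      _ = ∫ p, ‖p.1 - p.2‖ ^ 2 ∂γ₁ := by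
          refine integral_congr_ae (Filter.Eventually.of_forall fun p => ?_)
          show ‖p.2 - p.1‖ ^ 2 = ‖p.1 - p.2‖ ^ 2
          rw [norm_sub_rev]
  have hB : ∫ p : EucSp d × (EucSp d × EucSp d), ‖p.1 - p.2.2‖ ^ 2 ∂η
      = ∫ p, ‖p.1 - p.2‖ ^ 2 ∂γ₂ := by
    rw [← hη₂]
    exact (integral_map hmg₂.aemeasurable costMeas.aestronglyMeasurable).symm
  have hcost : ∫ p, ‖p.1 - p.2‖ ^ 2 ∂(η.map Prod.snd)
      = ∫ p : EucSp d × (EucSp d × EucSp d), ‖p.2.1 - p.2.2‖ ^ 2 ∂η :=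
    integral_map measurable_snd.aemeasurable costMeas.aestronglyMeasurable
  have hle : ∫ p : EucSp d × (EucSp d × EucSp d), ‖p.2.1 - p.2.2‖ ^ 2 ∂η
      ≤ ∫ p : EucSp d × (EucSp d × EucSp d),
          ((1+ε) * ‖p.1 - p.2.1‖ ^ 2 + (1+1/ε) * ‖p.1 - p.2.2‖ ^ 2) ∂η := by
    refine integral_mono_of_nonneg (Filter.Eventually.of_forall fun p => by positivity)
      ((hintA.const_mul _).add (hintB.const_mul _))
      (Filter.Eventually.of_forall fun p => ?_)
    have htri : ‖p.2.1 - p.2.2‖ ≤ ‖p.1 - p.2.1‖ + ‖p.1 - p.2.2‖ := by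
      have h := dist_triangle p.2.1 p.1 p.2.2
      rw [dist_eq_norm, dist_eq_norm, dist_eq_norm, norm_sub_rev p.2.1 p.1] at h
      exact h
    exact ptwise hε (norm_nonneg _) (norm_nonneg _) (norm_nonneg _) htri
  have hsum : ∫ p : EucSp d × (EucSp d × EucSp d),
        ((1+ε) * ‖p.1 - p.2.1‖ ^ 2 + (1+1/ε) * ‖p.1 - p.2.2‖ ^ 2) ∂η
      = (1+ε) * ∫ p, ‖p.1 - p.2‖ ^ 2 ∂γ₁ + (1+1/ε) * ∫ p, ‖p.1 - p.2‖ ^ 2 ∂γ₂ := by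
    rw [integral_add (hintA.const_mul _) (hintB.const_mul _),
      integral_const_mul, integral_const_mul, hA, hB]
  have hmem : (∫ p, ‖p.1 - p.2‖ ^ 2 ∂(η.map Prod.snd)) ∈
      {r | ∃ γ : Measure (EucSp d × EucSp d), IsProbabilityMeasure γ ∧ IsCoupling γ μ ν₀ ∧
        r = ∫ p, ‖p.1 - p.2‖ ^ 2 ∂γ} :=
    ⟨η.map Prod.snd, inferInstance, ⟨hγfst, hγsnd⟩, rfl⟩
  calc W2sq μ ν₀ ≤ ∫ p, ‖p.1 - p.2‖ ^ 2 ∂(η.map Prod.snd) :=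
        csInf_le (W2sqSet_bddBelow μ ν₀) hmem
    _ = ∫ p : EucSp d × (EucSp d × EucSp d), ‖p.2.1 - p.2.2‖ ^ 2 ∂η := hcost
    _ ≤ ∫ p : EucSp d × (EucSp d × EucSp d),
          ((1+ε) * ‖p.1 - p.2.1‖ ^ 2 + (1+1/ε) * ‖p.1 - p.2.2‖ ^ 2) ∂η := hle
    _ = (1+ε) * ∫ p, ‖p.1 - p.2‖ ^ 2 ∂γ₁ + (1+1/ε) * ∫ p, ‖p.1 - p.2‖ ^ 2 ∂γ₂ := hsum

end Glue2

section Main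
variable {d : ℕ}

lemma W2sqSet_swap {μ ν : Measure (EucSp d)} {r : ℝ}
    (h : r ∈ {r | ∃ γ : Measure (EucSp d × EucSp d), IsProbabilityMeasure γ ∧ IsCoupling γ μ ν ∧
        r = ∫ p, ‖p.1 - p.2‖ ^ 2 ∂γ}) :
    r ∈ {r | ∃ γ : Measure (EucSp d × EucSp d), IsProbabilityMeasure γ ∧ IsCoupling γ ν μ ∧
        r = ∫ p, ‖p.1 - p.2‖ ^ 2 ∂γ} := by
  obtain ⟨γ, hp, ⟨hf, hs⟩, rfl⟩ := h
  haveI := hp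
  refine ⟨γ.map Prod.swap, Measure.isProbabilityMeasure_map measurable_swap.aemeasurable, ⟨?_, ?_⟩, ?_⟩
  · rw [Measure.map_map measurable_fst measurable_swap]; exact hs
  · rw [Measure.map_map measurable_snd measurable_swap]; exact hf
  · rw [integral_map measurable_swap.aemeasurable costMeas.aestronglyMeasurable]
    refine integral_congr_ae (Filter.Eventually.of_forall fun p => ?_)
    show ‖p.1 - p.2‖ ^ 2 = ‖p.2 - p.1‖ ^ 2
    rw [norm_sub_rev]

lemma W2sq_symm (μ ν : Measure (EucSp d)) : W2sq μ ν = W2sq ν μ := by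
  rw [W2sq, W2sq]
  congr 1
  exact Set.Subset.antisymm (fun r h => W2sqSet_swap h) (fun r h => W2sqSet_swap h)

lemma W2sq_triangle {μ ν₁ ν₀ : Measure (EucSp d)}
    (hμ : μ ∈ P2 d) (h1 : ν₁ ∈ P2 d) (h0 : ν₀ ∈ P2 d) {ε : ℝ} (hε : 0 < ε) :
    W2sq μ ν₀ ≤ (1 + ε) * W2sq μ ν₁ + (1 + 1/ε) * W2sq ν₁ ν₀ := by
  have hpos₁ : (0:ℝ) < 1 + ε := by linarith
  have hpos₂ : (0:ℝ) < 1 + 1/ε := by positivity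
  have step1 : ∀ r₁ ∈ {r | ∃ γ : Measure (EucSp d × EucSp d), IsProbabilityMeasure γ ∧
      IsCoupling γ μ ν₁ ∧ r = ∫ p, ‖p.1 - p.2‖ ^ 2 ∂γ},
      W2sq μ ν₀ ≤ (1+ε) * r₁ + (1+1/ε) * W2sq ν₁ ν₀ := by
    intro r₁ hr₁
    obtain ⟨γ₁, hp₁, hc₁, rfl⟩ := hr₁
    have h2 : (W2sq μ ν₀ - (1+ε) * ∫ p, ‖p.1 - p.2‖ ^ 2 ∂γ₁)/(1+1/ε) ≤ W2sq ν₁ ν₀ := by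
      conv_rhs => rw [W2sq]
      refine le_csInf ⟨_, W2sqSet_nonempty h1 h0⟩ fun r₂ hr₂ => ?_
      obtain ⟨γ₂, hp₂, hc₂, rfl⟩ := hr₂
      rw [div_le_iff₀ hpos₂]
      have := glue_bound hμ h1 h0 hp₁ hp₂ hc₁ hc₂ hε
      linarith
    rw [div_le_iff₀ hpos₂] at h2
    linarith
  have h1' : (W2sq μ ν₀ - (1+1/ε) * W2sq ν₁ ν₀)/(1+ε) ≤ W2sq μ ν₁ := by
    conv_rhs => rw [W2sq]
    refine le_csInf ⟨_, W2sqSet_nonempty hμ h1⟩ fun r₁ hr₁ => ?_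
    rw [div_le_iff₀ hpos₁]
    linarith [step1 r₁ hr₁]
  rw [div_le_iff₀ hpos₁] at h1'
  linarith

end Main


/-- lower bound for the metric extrapolation functional. -/
theorem stmt_0 {d : ℕ} (hd : 1 ≤ d) {t : ℝ} (ht : 1 < t)
    (ν₀ ν₁ μ : Measure (EucSp d)) (h₀ : ν₀ ∈ P2 d) (h₁ : ν₁ ∈ P2 d) (hμ : μ ∈ P2 d) :
    Ft t ν₀ ν₁ μ ≥ -(W2sq ν₀ ν₁) / 2 := by
  have ht1 : 0 < t - 1 := by linarith
  have htpos : 0 < t := by linarith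
  have hε : 0 < 1/(t-1) := by positivity
  have htri := W2sq_triangle hμ h₁ h₀ hε
  rw [one_div_one_div] at htri
  rw [W2sq_symm ν₁ ν₀] at htri
  have h1e : (1:ℝ) + 1/(t-1) = t/(t-1) := by field_simp; ring
  have h2e : (1:ℝ) + (t-1) = t := by ring
  rw [h1e, h2e] at htri
  have hdiv : W2sq μ ν₀ / (2*t) ≤ (t/(t-1) * W2sq μ ν₁ + t * W2sq ν₀ ν₁)/(2*t) :=
    (div_le_div_iff_of_pos_right (by positivity)).mpr htri
  have heq : (t/(t-1) * W2sq μ ν₁ + t * W2sq ν₀ ν₁)/(2*t)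
      = W2sq μ ν₁/(2*(t-1)) + W2sq ν₀ ν₁/2 := by
    field_simp
  rw [heq] at hdiv
  rw [ge_iff_le, Ft]
  linarith
end

section
/- Let d ≥ 1, t > 1 and ν₀, ν₁ ∈ P₂(ℝ^d). Then the value of problem (P) equals −1/(2t(t−1)) times the value of the barycentric problem (B), plus (1/(2(t−1)))·∫|x|² dν₁(x) minus (1/(2t))·∫|x|² dν₀(x). -/
open MeasureTheory
open scoped ENNReal

/-- The barycenter of the disintegration `π_{x₁}` of `π` with respect to its second
marginal: `bary(π_{x₁}) = ∫ x₀ dπ_{x₁}(x₀)`. -/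
noncomputable def condBary {d : ℕ} (π : Measure (EucSp d × EucSp d))
    (hπ : IsProbabilityMeasure π) (x₁ : EucSp d) : EucSp d :=
  letI : IsProbabilityMeasure (π.map Prod.swap) :=
    Measure.isProbabilityMeasure_map measurable_swap.aemeasurable
  ∫ x₀, x₀ ∂((π.map Prod.swap).condKernel x₁)

/-- The value of the barycentric optimal transport problem `(B)`. -/
noncomputable def BVal {d : ℕ} (t : ℝ) (ν₀ ν₁ : Measure (EucSp d)) : ℝ :=
  sInf {r | ∃ π : Measure (EucSp d × EucSp d), ∃ hπ : IsProbabilityMeasure π,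
    IsCoupling π ν₀ ν₁ ∧
      r = ∫ x₁, ‖t • x₁ - (t - 1) • condBary π hπ x₁‖ ^ 2 ∂ν₁}

/-- `π` solves the barycentric problem `(B)`. -/
def BMinimizer {d : ℕ} (t : ℝ) (ν₀ ν₁ : Measure (EucSp d))
    (π : Measure (EucSp d × EucSp d)) (hπ : IsProbabilityMeasure π) : Prop :=
  IsCoupling π ν₀ ν₁ ∧
    ∀ (π' : Measure (EucSp d × EucSp d)) (hπ' : IsProbabilityMeasure π'),
      IsCoupling π' ν₀ ν₁ →
        ∫ x₁, ‖t • x₁ - (t - 1) • condBary π hπ x₁‖ ^ 2 ∂ν₁ ≤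
          ∫ x₁, ‖t • x₁ - (t - 1) • condBary π' hπ' x₁‖ ^ 2 ∂ν₁

/-- The value of problem `(P)`. -/
noncomputable def PVal {d : ℕ} (t : ℝ) (ν₀ ν₁ : Measure (EucSp d)) : ℝ :=
  sInf {r | ∃ μ ∈ P2 d, r = Ft t ν₀ ν₁ μ}

/-! ### Auxiliary development -/

open ProbabilityTheory
open scoped RealInnerProductSpace

namespace Stmt13

variable {d : ℕ}

/-- Integrability of a function of the first coordinate under a measure with given fst marginal. -/
lemma integrable_comp_fst {γ : Measure (EucSp d × EucSp d)} {μ : Measure (EucSp d)}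
    (h : γ.map Prod.fst = μ) {g : EucSp d → ℝ} (hg : AEStronglyMeasurable g μ)
    (hgi : Integrable g μ) : Integrable (fun p : EucSp d × EucSp d => g p.1) γ := by
  have := (integrable_map_measure (f := Prod.fst) (g := g) (by rw [h]; exact hg)
    measurable_fst.aemeasurable).mp (by rw [h]; exact hgi)
  exact this

lemma integrable_comp_snd {γ : Measure (EucSp d × EucSp d)} {ν : Measure (EucSp d)}
    (h : γ.map Prod.snd = ν) {g : EucSp d → ℝ} (hg : AEStronglyMeasurable g ν)
    (hgi : Integrable g ν) : Integrable (fun p : EucSp d × EucSp d => g p.2) γ := by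
  have := (integrable_map_measure (f := Prod.snd) (g := g) (by rw [h]; exact hg)
    measurable_snd.aemeasurable).mp (by rw [h]; exact hgi)
  exact this

lemma integral_comp_fst {γ : Measure (EucSp d × EucSp d)} {μ : Measure (EucSp d)}
    (h : γ.map Prod.fst = μ) {g : EucSp d → ℝ} (hg : AEStronglyMeasurable g μ) :
    ∫ x, g x ∂μ = ∫ p, g p.1 ∂γ := by
  rw [← h, integral_map measurable_fst.aemeasurable (by rw [h]; exact hg)]

lemma integral_comp_snd {γ : Measure (EucSp d × EucSp d)} {ν : Measure (EucSp d)}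
    (h : γ.map Prod.snd = ν) {g : EucSp d → ℝ} (hg : AEStronglyMeasurable g ν) :
    ∫ x, g x ∂ν = ∫ p, g p.2 ∂γ := by
  rw [← h, integral_map measurable_snd.aemeasurable (by rw [h]; exact hg)]

lemma asm_norm_sq (μ : Measure (EucSp d)) : AEStronglyMeasurable (fun x : EucSp d => ‖x‖ ^ 2) μ :=
  (continuous_norm.pow 2).aestronglyMeasurable

lemma asm_inner (γ : Measure (EucSp d × EucSp d)) :
    AEStronglyMeasurable (fun p : EucSp d × EucSp d => ⟪p.1, p.2⟫) γ :=
  continuous_inner.aestronglyMeasurable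

/-- Integrability of the inner product under a coupling with square-integrable marginals. -/
lemma integrable_inner_coupling {γ : Measure (EucSp d × EucSp d)}
    {μ ν : Measure (EucSp d)} (hc : IsCoupling γ μ ν)
    (hμ : Integrable (fun x => ‖x‖ ^ 2) μ) (hν : Integrable (fun x => ‖x‖ ^ 2) ν) :
    Integrable (fun p : EucSp d × EucSp d => ⟪p.1, p.2⟫) γ := by
  have h1 := integrable_comp_fst hc.1 (asm_norm_sq μ) hμ
  have h2 := integrable_comp_snd hc.2 (asm_norm_sq ν) hν
  refine Integrable.mono' (((h1.add h2).const_mul (1/2 : ℝ))) (asm_inner γ) ?_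
  filter_upwards with p
  have h3 : |⟪p.1, p.2⟫| ≤ ‖p.1‖ * ‖p.2‖ := abs_real_inner_le_norm _ _
  have h4 : ‖p.1‖ * ‖p.2‖ ≤ (‖p.1‖ ^ 2 + ‖p.2‖ ^ 2) / 2 := by nlinarith [sq_nonneg (‖p.1‖ - ‖p.2‖)]
  simpa [Real.norm_eq_abs] using h3.trans (by linarith)

lemma integrable_cost_coupling {γ : Measure (EucSp d × EucSp d)}
    {μ ν : Measure (EucSp d)} (hc : IsCoupling γ μ ν)
    (hμ : Integrable (fun x => ‖x‖ ^ 2) μ) (hν : Integrable (fun x => ‖x‖ ^ 2) ν) :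
    Integrable (fun p : EucSp d × EucSp d => ‖p.1 - p.2‖ ^ 2) γ := by
  have h1 := integrable_comp_fst hc.1 (asm_norm_sq μ) hμ
  have h2 := integrable_comp_snd hc.2 (asm_norm_sq ν) hν
  refine Integrable.mono' (((h1.add h2).const_mul (2 : ℝ)))
    ((continuous_norm.pow 2 |>.comp (continuous_fst.sub continuous_snd)).aestronglyMeasurable) ?_
  filter_upwards with p
  have : ‖p.1 - p.2‖ ^ 2 ≤ 2 * (‖p.1‖ ^ 2 + ‖p.2‖ ^ 2) := by
    have := norm_sub_le p.1 p.2
    nlinarith [norm_nonneg (p.1 - p.2), norm_nonneg p.1, norm_nonneg p.2,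
      sq_nonneg (‖p.1‖ - ‖p.2‖)]
  rw [Real.norm_eq_abs, abs_of_nonneg (sq_nonneg _)]
  simp only [Pi.add_apply]
  linarith

/-- Expansion of the quadratic cost. -/
lemma cost_expand {γ : Measure (EucSp d × EucSp d)}
    {μ ν : Measure (EucSp d)} (hc : IsCoupling γ μ ν)
    (hμ : Integrable (fun x => ‖x‖ ^ 2) μ) (hν : Integrable (fun x => ‖x‖ ^ 2) ν) :
    ∫ p, ‖p.1 - p.2‖ ^ 2 ∂γ
      = (∫ x, ‖x‖ ^ 2 ∂μ) + (∫ x, ‖x‖ ^ 2 ∂ν) - 2 * ∫ p, ⟪p.1, p.2⟫ ∂γ := by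
  have h1 := integrable_comp_fst hc.1 (asm_norm_sq μ) hμ
  have h2 := integrable_comp_snd hc.2 (asm_norm_sq ν) hν
  have h3 := integrable_inner_coupling hc hμ hν
  have hpt : ∀ p : EucSp d × EucSp d,
      ‖p.1 - p.2‖ ^ 2 = ‖p.1‖ ^ 2 + ‖p.2‖ ^ 2 - 2 * ⟪p.1, p.2⟫ := by
    intro p
    have := norm_sub_sq_real p.1 p.2
    linarith [this]
  calc ∫ p, ‖p.1 - p.2‖ ^ 2 ∂γ
      = ∫ p, (‖p.1‖ ^ 2 + ‖p.2‖ ^ 2 - 2 * ⟪p.1, p.2⟫) ∂γ := by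
        exact integral_congr_ae (Filter.Eventually.of_forall hpt)
    _ = (∫ p, ‖p.1‖ ^ 2 ∂γ) + (∫ p, ‖p.2‖ ^ 2 ∂γ) - 2 * ∫ p, ⟪p.1, p.2⟫ ∂γ := by
        have h12 : Integrable (fun p : EucSp d × EucSp d => ‖p.1‖ ^ 2 + ‖p.2‖ ^ 2) γ := h1.add h2
        rw [integral_sub h12 (h3.const_mul 2), integral_add h1 h2, integral_const_mul]
    _ = (∫ x, ‖x‖ ^ 2 ∂μ) + (∫ x, ‖x‖ ^ 2 ∂ν) - 2 * ∫ p, ⟪p.1, p.2⟫ ∂γ := by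
        rw [integral_comp_fst hc.1 (asm_norm_sq μ), integral_comp_snd hc.2 (asm_norm_sq ν)]


/-! ### Barycenters of disintegrations -/

/-- Conditional barycenter of the first coordinate given the second... here: barycenter of the
kernel obtained by disintegrating `ρ` with respect to its first marginal. -/
noncomputable def bar (ρ : Measure (EucSp d × EucSp d)) [IsFiniteMeasure ρ] (x : EucSp d) :
    EucSp d :=
  ∫ y, y ∂ρ.condKernel x

section Disint

variable {ρ : Measure (EucSp d × EucSp d)} [IsProbabilityMeasure ρ]

lemma stronglyMeasurable_bar : StronglyMeasurable (bar ρ) :=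
  MeasureTheory.StronglyMeasurable.integral_kernel_prod_right
    (f := fun (_ : EucSp d) (y : EucSp d) => y) (κ := ρ.condKernel) measurable_snd.stronglyMeasurable

lemma ae_int_sq (hρ2 : Integrable (fun p : EucSp d × EucSp d => ‖p.2‖ ^ 2) ρ) :
    ∀ᵐ x ∂ρ.fst, Integrable (fun y => ‖y‖ ^ 2) (ρ.condKernel x) := by
  have h := hρ2
  rw [← ρ.disintegrate ρ.condKernel] at h
  have := (Measure.integrable_compProd_iff (f := fun p : EucSp d × EucSp d => ‖p.2‖ ^ 2)
    ((continuous_norm.pow 2).comp continuous_snd).aestronglyMeasurable).mp h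
  exact this.1

lemma ae_memℒp2 (hρ2 : Integrable (fun p : EucSp d × EucSp d => ‖p.2‖ ^ 2) ρ) :
    ∀ᵐ x ∂ρ.fst, MemLp (fun y : EucSp d => y) 2 (ρ.condKernel x) := by
  filter_upwards [ae_int_sq hρ2] with x hx
  exact (memLp_two_iff_integrable_sq_norm aestronglyMeasurable_id).mpr hx

lemma ae_int_id (hρ2 : Integrable (fun p : EucSp d × EucSp d => ‖p.2‖ ^ 2) ρ) :
    ∀ᵐ x ∂ρ.fst, Integrable (fun y : EucSp d => y) (ρ.condKernel x) := by
  filter_upwards [ae_memℒp2 hρ2] with x hx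
  exact hx.integrable one_le_two

/-- Pointwise Jensen inequality for the squared norm. -/
lemma norm_integral_id_sq_le (m : Measure (EucSp d)) [IsProbabilityMeasure m]
    (h2 : Integrable (fun y : EucSp d => ‖y‖ ^ 2) m) :
    ‖∫ y, y ∂m‖ ^ 2 ≤ ∫ y, ‖y‖ ^ 2 ∂m := by
  have hm : MemLp (fun y : EucSp d => y) 2 m :=
    (memLp_two_iff_integrable_sq_norm aestronglyMeasurable_id).mpr h2
  have h1 : Integrable (fun y : EucSp d => ‖y‖) m := hm.norm.integrable one_le_two
  set c := ∫ y : EucSp d, ‖y‖ ∂m with hc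
  have hcnn : 0 ≤ c := integral_nonneg fun y => norm_nonneg y
  have hexp : ∫ y, (‖y‖ - c) ^ 2 ∂m = (∫ y : EucSp d, ‖y‖ ^ 2 ∂m) - c ^ 2 := by
    have hpt : ∀ y : EucSp d, (‖y‖ - c) ^ 2 = ‖y‖ ^ 2 - 2 * c * ‖y‖ + c ^ 2 := fun y => by ring
    calc ∫ y, (‖y‖ - c) ^ 2 ∂m = ∫ y : EucSp d, (‖y‖ ^ 2 - 2 * c * ‖y‖ + c ^ 2) ∂m :=
          integral_congr_ae (Filter.Eventually.of_forall hpt)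
      _ = (∫ y : EucSp d, ‖y‖ ^ 2 ∂m) - c ^ 2 := by
          have hsub : Integrable (fun y : EucSp d => ‖y‖ ^ 2 - 2 * c * ‖y‖) m :=
            h2.sub (h1.const_mul (2 * c))
          rw [integral_add hsub (integrable_const _),
            integral_sub h2 (h1.const_mul (2 * c)), integral_const_mul, integral_const]
          simp only [measure_univ, ENNReal.toReal_one, smul_eq_mul, one_mul, ← hc, probReal_univ]
          ring
  have hvar : 0 ≤ ∫ y, (‖y‖ - c) ^ 2 ∂m := integral_nonneg fun y => sq_nonneg _
  have h6 : ‖∫ y, y ∂m‖ ≤ c := norm_integral_le_integral_norm _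
  nlinarith [norm_nonneg (∫ y, y ∂m)]

lemma ae_bar_sq_le (hρ2 : Integrable (fun p : EucSp d × EucSp d => ‖p.2‖ ^ 2) ρ) :
    ∀ᵐ x ∂ρ.fst, ‖bar ρ x‖ ^ 2 ≤ ∫ y, ‖y‖ ^ 2 ∂ρ.condKernel x := by
  filter_upwards [ae_int_sq hρ2] with x hx
  exact norm_integral_id_sq_le _ hx

lemma integrable_kernel_sq (hρ2 : Integrable (fun p : EucSp d × EucSp d => ‖p.2‖ ^ 2) ρ) :
    Integrable (fun x => ∫ y, ‖y‖ ^ 2 ∂ρ.condKernel x) ρ.fst := by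
  have h := hρ2
  rw [← ρ.disintegrate ρ.condKernel] at h
  have := (Measure.integrable_compProd_iff (f := fun p : EucSp d × EucSp d => ‖p.2‖ ^ 2)
    ((continuous_norm.pow 2).comp continuous_snd).aestronglyMeasurable).mp h
  refine this.2.congr (Filter.Eventually.of_forall fun x => ?_)
  refine integral_congr_ae (Filter.Eventually.of_forall fun y => ?_)
  simp only [Real.norm_eq_abs, abs_of_nonneg (sq_nonneg (‖y‖ : ℝ))]

lemma integral_kernel_sq_eq (hρ2 : Integrable (fun p : EucSp d × EucSp d => ‖p.2‖ ^ 2) ρ) :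
    ∫ x, (∫ y, ‖y‖ ^ 2 ∂ρ.condKernel x) ∂ρ.fst = ∫ p, ‖p.2‖ ^ 2 ∂ρ :=
  Measure.integral_condKernel (f := fun p : EucSp d × EucSp d => ‖p.2‖ ^ 2) hρ2

lemma integrable_bar_sq (hρ2 : Integrable (fun p : EucSp d × EucSp d => ‖p.2‖ ^ 2) ρ) :
    Integrable (fun x => ‖bar ρ x‖ ^ 2) ρ.fst := by
  refine Integrable.mono' (integrable_kernel_sq hρ2)
    ((stronglyMeasurable_bar.norm.pow 2).aestronglyMeasurable) ?_
  filter_upwards [ae_bar_sq_le hρ2] with x hx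
  rw [Real.norm_eq_abs, abs_of_nonneg (sq_nonneg _)]
  exact hx

lemma memℒp_bar (hρ2 : Integrable (fun p : EucSp d × EucSp d => ‖p.2‖ ^ 2) ρ) :
    MemLp (bar ρ) 2 ρ.fst :=
  (memLp_two_iff_integrable_sq_norm stronglyMeasurable_bar.aestronglyMeasurable).mpr
    (integrable_bar_sq hρ2)

lemma integral_bar_sq_le (hρ2 : Integrable (fun p : EucSp d × EucSp d => ‖p.2‖ ^ 2) ρ) :
    ∫ x, ‖bar ρ x‖ ^ 2 ∂ρ.fst ≤ ∫ p, ‖p.2‖ ^ 2 ∂ρ := by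
  rw [← integral_kernel_sq_eq hρ2]
  exact integral_mono_ae (integrable_bar_sq hρ2) (integrable_kernel_sq hρ2) (ae_bar_sq_le hρ2)

/-- The key conditional-expectation computation for cross terms. -/
lemma cross_eq (hρ2 : Integrable (fun p : EucSp d × EucSp d => ‖p.2‖ ^ 2) ρ)
    {g : EucSp d → EucSp d} (hg : MemLp g 2 ρ.fst) :
    ∫ p, ⟪g p.1, p.2⟫ ∂ρ = ∫ x, ⟪g x, bar ρ x⟫ ∂ρ.fst := by
  have hgsq : Integrable (fun x => ‖g x‖ ^ 2) ρ.fst :=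
    (memLp_two_iff_integrable_sq_norm hg.aestronglyMeasurable).mp hg
  have hasm1 : AEStronglyMeasurable (fun p : EucSp d × EucSp d => g p.1) ρ :=
    AEStronglyMeasurable.comp_aemeasurable
      (by exact hg.aestronglyMeasurable) measurable_fst.aemeasurable
  have hgsq' : Integrable (fun p : EucSp d × EucSp d => ‖g p.1‖ ^ 2) ρ := by
    have := (integrable_map_measure (f := Prod.fst)
      (g := fun x : EucSp d => ‖g x‖ ^ 2)
      (by exact hg.aestronglyMeasurable.norm.pow 2) measurable_fst.aemeasurable).mp hgsq
    exact this
  have aestronglyMeasurable_snd' : AEStronglyMeasurable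
      (fun p : EucSp d × EucSp d => p.2) ρ := measurable_snd.aestronglyMeasurable
  have hint : Integrable (fun p : EucSp d × EucSp d => ⟪g p.1, p.2⟫) ρ := by
    refine Integrable.mono' ((hgsq'.add hρ2).const_mul (1/2 : ℝ))
      (continuous_inner.comp_aestronglyMeasurable (hasm1.prodMk aestronglyMeasurable_snd')) ?_
    filter_upwards with p
    have h3 : |⟪g p.1, p.2⟫| ≤ ‖g p.1‖ * ‖p.2‖ := abs_real_inner_le_norm _ _
    have h4 : ‖g p.1‖ * ‖p.2‖ ≤ (‖g p.1‖ ^ 2 + ‖p.2‖ ^ 2) / 2 := by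
      nlinarith [sq_nonneg (‖g p.1‖ - ‖p.2‖)]
    rw [Real.norm_eq_abs]
    simp only [Pi.add_apply]
    linarith
  rw [← Measure.integral_condKernel (f := fun p : EucSp d × EucSp d => ⟪g p.1, p.2⟫) hint]
  refine integral_congr_ae ?_
  filter_upwards [ae_int_id hρ2] with x hx
  exact integral_inner hx (g x)

end Disint

/-! ### Gluing helpers -/

lemma fst_def (ρ : Measure (EucSp d × EucSp d)) : ρ.fst = ρ.map Prod.fst := rfl
lemma snd_def (ρ : Measure (EucSp d × EucSp d)) : ρ.snd = ρ.map Prod.snd := rfl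

section Glue

variable {μ : Measure (EucSp d)} [IsProbabilityMeasure μ]
  (κ η : Kernel (EucSp d) (EucSp d)) [IsMarkovKernel κ] [IsMarkovKernel η]

lemma meas_proj1 : Measurable (fun p : EucSp d × (EucSp d × EucSp d) => (p.1, p.2.1)) :=
  measurable_fst.prodMk (measurable_fst.comp measurable_snd)

lemma meas_proj2 : Measurable (fun p : EucSp d × (EucSp d × EucSp d) => (p.1, p.2.2)) :=
  measurable_fst.prodMk (measurable_snd.comp measurable_snd)

lemma map_compProd_prod_left :
    (μ ⊗ₘ (κ ×ₖ η)).map (fun p => (p.1, p.2.1)) = μ ⊗ₘ κ := by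
  ext s hs
  rw [Measure.map_apply meas_proj1 hs, Measure.compProd_apply (meas_proj1 hs),
    Measure.compProd_apply hs]
  refine lintegral_congr fun a => ?_
  have hset : (Prod.mk a ⁻¹' ((fun p : EucSp d × (EucSp d × EucSp d) => (p.1, p.2.1)) ⁻¹' s))
      = Prod.fst ⁻¹' (Prod.mk a ⁻¹' s) := rfl
  rw [hset, Kernel.prod_apply, ← Set.prod_univ, Measure.prod_prod, measure_univ, mul_one]

lemma map_compProd_prod_right :
    (μ ⊗ₘ (κ ×ₖ η)).map (fun p => (p.1, p.2.2)) = μ ⊗ₘ η := by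
  ext s hs
  rw [Measure.map_apply meas_proj2 hs, Measure.compProd_apply (meas_proj2 hs),
    Measure.compProd_apply hs]
  refine lintegral_congr fun a => ?_
  have hset : (Prod.mk a ⁻¹' ((fun p : EucSp d × (EucSp d × EucSp d) => (p.1, p.2.2)) ⁻¹' s))
      = Prod.snd ⁻¹' (Prod.mk a ⁻¹' s) := rfl
  rw [hset, Kernel.prod_apply, ← Set.univ_prod, Measure.prod_prod, measure_univ, one_mul]

lemma map_compProd_snd_fst :
    (μ ⊗ₘ (κ ×ₖ η)).map (fun p => p.2.1) = (μ ⊗ₘ κ).map Prod.snd := by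
  rw [← map_compProd_prod_left κ η, Measure.map_map measurable_snd meas_proj1]
  rfl

lemma map_compProd_snd_snd :
    (μ ⊗ₘ (κ ×ₖ η)).map (fun p => p.2.2) = (μ ⊗ₘ η).map Prod.snd := by
  rw [← map_compProd_prod_right κ η, Measure.map_map measurable_snd meas_proj2]
  rfl

end Glue

/-- Integrability of an inner product from square-integrability of the two factors. -/
lemma integrable_inner_of_sq {Ω : Type*} [MeasurableSpace Ω] {m : Measure Ω}
    {f₁ f₂ : Ω → EucSp d}
    (h₁ : Integrable (fun ω => ‖f₁ ω‖ ^ 2) m) (h₂ : Integrable (fun ω => ‖f₂ ω‖ ^ 2) m)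
    (a₁ : AEStronglyMeasurable f₁ m) (a₂ : AEStronglyMeasurable f₂ m) :
    Integrable (fun ω => ⟪f₁ ω, f₂ ω⟫) m := by
  refine Integrable.mono' ((h₁.add h₂).const_mul (1/2 : ℝ))
    (continuous_inner.comp_aestronglyMeasurable (a₁.prodMk a₂)) ?_
  filter_upwards with ω
  have h3 : |⟪f₁ ω, f₂ ω⟫| ≤ ‖f₁ ω‖ * ‖f₂ ω‖ := abs_real_inner_le_norm _ _
  have h4 : ‖f₁ ω‖ * ‖f₂ ω‖ ≤ (‖f₁ ω‖ ^ 2 + ‖f₂ ω‖ ^ 2) / 2 := by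
    nlinarith [sq_nonneg (‖f₁ ω‖ - ‖f₂ ω‖)]
  rw [Real.norm_eq_abs]
  simp only [Pi.add_apply]
  linarith

/-- Integral of the inner product over a product measure. -/
lemma integral_inner_prod_meas (m n : Measure (EucSp d)) [IsProbabilityMeasure m]
    [IsProbabilityMeasure n] (h2m : Integrable (fun y : EucSp d => ‖y‖ ^ 2) m)
    (h2n : Integrable (fun y : EucSp d => ‖y‖ ^ 2) n) :
    ∫ q, ⟪q.1, q.2⟫ ∂(m.prod n) = ⟪∫ y, y ∂m, ∫ z, z ∂n⟫ := by
  have hidm : Integrable (fun y : EucSp d => y) m :=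
    ((memLp_two_iff_integrable_sq_norm aestronglyMeasurable_id).mpr h2m).integrable one_le_two
  have hidn : Integrable (fun y : EucSp d => y) n :=
    ((memLp_two_iff_integrable_sq_norm aestronglyMeasurable_id).mpr h2n).integrable one_le_two
  have h2m' : Integrable (fun q : EucSp d × EucSp d => ‖q.1‖ ^ 2) (m.prod n) := by
    have hmap : (m.prod n).map Prod.fst = m := by
      rw [Measure.map_fst_prod]; simp
    exact integrable_comp_fst hmap (asm_norm_sq m) h2m
  have h2n' : Integrable (fun q : EucSp d × EucSp d => ‖q.2‖ ^ 2) (m.prod n) := by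
    have hmap : (m.prod n).map Prod.snd = n := by
      rw [Measure.map_snd_prod]; simp
    exact integrable_comp_snd hmap (asm_norm_sq n) h2n
  have hint : Integrable (fun q : EucSp d × EucSp d => ⟪q.1, q.2⟫) (m.prod n) :=
    integrable_inner_of_sq h2m' h2n' measurable_fst.aestronglyMeasurable
      measurable_snd.aestronglyMeasurable
  rw [MeasureTheory.integral_prod _ hint]
  have : ∀ y : EucSp d, ∫ z, ⟪y, z⟫ ∂n = ⟪y, ∫ z, z ∂n⟫ := fun y => integral_inner hidn y
  rw [integral_congr_ae (Filter.Eventually.of_forall fun y => this y)]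
  calc ∫ y, ⟪y, ∫ z, z ∂n⟫ ∂m = ∫ y, ⟪(∫ z, z ∂n : EucSp d), y⟫ ∂m := by
        refine integral_congr_ae (Filter.Eventually.of_forall fun y => real_inner_comm _ _)
    _ = ⟪(∫ z, z ∂n : EucSp d), ∫ y, y ∂m⟫ := integral_inner hidm _
    _ = ⟪∫ y, y ∂m, ∫ z, z ∂n⟫ := real_inner_comm _ _

instance instProbSwap (γ : Measure (EucSp d × EucSp d)) [IsProbabilityMeasure γ] :
    IsProbabilityMeasure (γ.map Prod.swap) :=
  Measure.isProbabilityMeasure_map measurable_swap.aemeasurable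

/-- Gluing a coupling of `(μ, ν₁)` with a coupling of `(ν₀, ν₁)` along `ν₁`. -/
lemma glue1 {μ ν₀ ν₁ : Measure (EucSp d)} (γ₁ π : Measure (EucSp d × EucSp d))
    [IsProbabilityMeasure γ₁] [IsProbabilityMeasure π]
    (hγ : IsCoupling γ₁ μ ν₁) (hπ : IsCoupling π ν₀ ν₁)
    (hμ2 : Integrable (fun x => ‖x‖ ^ 2) μ) (hν₀2 : Integrable (fun x => ‖x‖ ^ 2) ν₀) :
    ∃ γ₀ : Measure (EucSp d × EucSp d), IsProbabilityMeasure γ₀ ∧ IsCoupling γ₀ μ ν₀ ∧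
      ∫ p, ⟪p.1, p.2⟫ ∂γ₀ =
        ∫ x₁, ⟪bar (γ₁.map Prod.swap) x₁, bar (π.map Prod.swap) x₁⟫ ∂ν₁ := by
  set ρc := γ₁.map Prod.swap with hρc
  set ρb := π.map Prod.swap with hρb
  have hρc_fst : ρc.fst = ν₁ := by rw [hρc, Measure.fst_map_swap, snd_def, hγ.2]
  have hρb_fst : ρb.fst = ν₁ := by rw [hρb, Measure.fst_map_swap, snd_def, hπ.2]
  haveI : IsProbabilityMeasure ν₁ := hρc_fst ▸ (inferInstance : IsProbabilityMeasure ρc.fst)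
  set κc := ρc.condKernel with hκc
  set κb := ρb.condKernel with hκb
  set α := ν₁ ⊗ₘ (κc ×ₖ κb) with hα
  set γ₀ := α.map (fun p => p.2) with hγ₀
  haveI : IsProbabilityMeasure γ₀ := Measure.isProbabilityMeasure_map measurable_snd.aemeasurable
  have h1 : ν₁ ⊗ₘ κc = ρc := by rw [← hρc_fst]; exact ρc.disintegrate ρc.condKernel
  have h2 : ν₁ ⊗ₘ κb = ρb := by rw [← hρb_fst]; exact ρb.disintegrate ρb.condKernel
  have hchain1 : α.map (fun p => p.2.1) = μ := by
    rw [hα, map_compProd_snd_fst, h1, ← snd_def, hρc, Measure.snd_map_swap, fst_def, hγ.1]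
  have hchain2 : α.map (fun p => p.2.2) = ν₀ := by
    rw [hα, map_compProd_snd_snd, h2, ← snd_def, hρb, Measure.snd_map_swap, fst_def, hπ.1]
  have hm_fst : γ₀.map Prod.fst = μ := by
    rw [hγ₀, Measure.map_map measurable_fst measurable_snd]
    exact hchain1
  have hm_snd : γ₀.map Prod.snd = ν₀ := by
    rw [hγ₀, Measure.map_map measurable_snd measurable_snd]
    exact hchain2
  have hα1 : Integrable (fun q : EucSp d × (EucSp d × EucSp d) => ‖q.2.1‖ ^ 2) α := by
    have := (integrable_map_measure (f := fun q : EucSp d × (EucSp d × EucSp d) => q.2.1)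
      (g := fun x : EucSp d => ‖x‖ ^ 2) (by rw [hchain1]; exact asm_norm_sq μ)
      (measurable_fst.comp measurable_snd).aemeasurable).mp (by rw [hchain1]; exact hμ2)
    exact this
  have hα2 : Integrable (fun q : EucSp d × (EucSp d × EucSp d) => ‖q.2.2‖ ^ 2) α := by
    have := (integrable_map_measure (f := fun q : EucSp d × (EucSp d × EucSp d) => q.2.2)
      (g := fun x : EucSp d => ‖x‖ ^ 2) (by rw [hchain2]; exact asm_norm_sq ν₀)
      (measurable_snd.comp measurable_snd).aemeasurable).mp (by rw [hchain2]; exact hν₀2)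
    exact this
  have hαint : Integrable (fun q : EucSp d × (EucSp d × EucSp d) => ⟪q.2.1, q.2.2⟫) α :=
    integrable_inner_of_sq hα1 hα2
      (measurable_fst.comp measurable_snd).aestronglyMeasurable
      (measurable_snd.comp measurable_snd).aestronglyMeasurable
  refine ⟨γ₀, inferInstance, ⟨hm_fst, hm_snd⟩, ?_⟩
  have hIγ₀ : ∫ p, ⟪p.1, p.2⟫ ∂γ₀ = ∫ q, ⟪q.2.1, q.2.2⟫ ∂α := by
    rw [hγ₀, integral_map measurable_snd.aemeasurable (asm_inner _)]
  rw [hIγ₀, hα, Measure.integral_compProd (by rw [← hα]; exact hαint)]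
  -- integrability hypotheses for the kernels, a.e. in x₁
  have hρc2 : Integrable (fun p : EucSp d × EucSp d => ‖p.2‖ ^ 2) ρc := by
    rw [hρc]
    refine (integrable_map_measure (μ := γ₁) (f := Prod.swap)
      (g := fun p : EucSp d × EucSp d => ‖p.2‖ ^ 2)
      ((continuous_norm.pow 2).comp continuous_snd).aestronglyMeasurable
      measurable_swap.aemeasurable).mpr ?_
    exact integrable_comp_fst hγ.1 (asm_norm_sq μ) hμ2
  have hρb2 : Integrable (fun p : EucSp d × EucSp d => ‖p.2‖ ^ 2) ρb := by
    rw [hρb]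
    refine (integrable_map_measure (μ := π) (f := Prod.swap)
      (g := fun p : EucSp d × EucSp d => ‖p.2‖ ^ 2)
      ((continuous_norm.pow 2).comp continuous_snd).aestronglyMeasurable
      measurable_swap.aemeasurable).mpr ?_
    exact integrable_comp_fst hπ.1 (asm_norm_sq ν₀) hν₀2
  have haec := ae_int_sq hρc2
  have haeb := ae_int_sq hρb2
  rw [hρc_fst] at haec
  rw [hρb_fst] at haeb
  refine integral_congr_ae ?_
  filter_upwards [haec, haeb] with x hx hx'
  rw [Kernel.prod_apply, integral_inner_prod_meas _ _ hx hx']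
  rfl

/-- Gluing an arbitrary coupling of `(w_# ν₁, ν₀)` with the deterministic coupling given by `w`. -/
lemma glue2 {ν₀ ν₁ : Measure (EucSp d)} [IsProbabilityMeasure ν₁] [IsProbabilityMeasure ν₀]
    {w : EucSp d → EucSp d} (hw : StronglyMeasurable w)
    (hw2 : Integrable (fun x => ‖w x‖ ^ 2) ν₁)
    (hν₀2 : Integrable (fun x => ‖x‖ ^ 2) ν₀)
    (γ₀ : Measure (EucSp d × EucSp d)) [IsProbabilityMeasure γ₀]
    (hγ : IsCoupling γ₀ (ν₁.map w) ν₀) :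
    ∃ π' : Measure (EucSp d × EucSp d), ∃ hπ' : IsProbabilityMeasure π', IsCoupling π' ν₀ ν₁ ∧
      ∫ p, ⟪p.1, p.2⟫ ∂γ₀ = ∫ x₁, ⟪w x₁, condBary π' hπ' x₁⟫ ∂ν₁ := by
  have hwm : Measurable w := hw.measurable
  have hF : Measurable fun x₁ : EucSp d => (w x₁, x₁) := hwm.prodMk measurable_id
  set μs := ν₁.map w with hμs
  haveI : IsProbabilityMeasure μs := Measure.isProbabilityMeasure_map hwm.aemeasurable
  set δ := ν₁.map (fun x₁ => (w x₁, x₁)) with hδ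
  haveI : IsProbabilityMeasure δ := Measure.isProbabilityMeasure_map hF.aemeasurable
  have hδfst : δ.fst = μs := by
    rw [hδ, fst_def, Measure.map_map measurable_fst hF, hμs]
    rfl
  have hδsnd : δ.map Prod.snd = ν₁ := by
    rw [hδ, Measure.map_map measurable_snd hF]
    exact Measure.map_id
  have hγfst : γ₀.fst = μs := by rw [fst_def, hγ.1]
  set κ₀ := γ₀.condKernel with hκ₀
  set κ₁ := δ.condKernel with hκ₁
  set α := μs ⊗ₘ (κ₀ ×ₖ κ₁) with hα
  set π' := α.map (fun p => p.2) with hπ'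
  haveI : IsProbabilityMeasure π' := Measure.isProbabilityMeasure_map measurable_snd.aemeasurable
  have h1 : μs ⊗ₘ κ₀ = γ₀ := by rw [← hγfst]; exact γ₀.disintegrate γ₀.condKernel
  have h2 : μs ⊗ₘ κ₁ = δ := by rw [← hδfst]; exact δ.disintegrate δ.condKernel
  have hchain1 : α.map (fun p => p.2.1) = ν₀ := by
    rw [hα, map_compProd_snd_fst, h1, hγ.2]
  have hchain2 : α.map (fun p => p.2.2) = ν₁ := by
    rw [hα, map_compProd_snd_snd, h2, hδsnd]
  have hπ'fst : π'.map Prod.fst = ν₀ := by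
    rw [hπ', Measure.map_map measurable_fst measurable_snd]
    exact hchain1
  have hπ'snd : π'.map Prod.snd = ν₁ := by
    rw [hπ', Measure.map_map measurable_snd measurable_snd]
    exact hchain2
  -- almost everywhere, the first coordinate is `w` of the last
  have hSmeas : MeasurableSet {p : EucSp d × (EucSp d × EucSp d) | p.1 = w p.2.2} := by
    have : {p : EucSp d × (EucSp d × EucSp d) | p.1 = w p.2.2}
        = (fun p : EucSp d × (EucSp d × EucSp d) => p.1 - w p.2.2) ⁻¹' {0} := by
      ext p
      simp [sub_eq_zero]
    rw [this]
    exact (measurable_fst.sub (hwm.comp (measurable_snd.comp measurable_snd)))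
      (measurableSet_singleton 0)
  have hTmeas : MeasurableSet {q : EucSp d × EucSp d | q.1 = w q.2} := by
    have : {q : EucSp d × EucSp d | q.1 = w q.2}
        = (fun q : EucSp d × EucSp d => q.1 - w q.2) ⁻¹' {0} := by
      ext q
      simp [sub_eq_zero]
    rw [this]
    exact (measurable_fst.sub (hwm.comp measurable_snd)) (measurableSet_singleton 0)
  have hδT : δ {q : EucSp d × EucSp d | q.1 = w q.2} = 1 := by
    rw [hδ, Measure.map_apply hF hTmeas]
    have : ((fun x₁ => (w x₁, x₁)) ⁻¹' {q : EucSp d × EucSp d | q.1 = w q.2}) = Set.univ := by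
      ext x₁
      simp
    rw [this, measure_univ]
  have hαS : α {p : EucSp d × (EucSp d × EucSp d) | p.1 = w p.2.2} = 1 := by
    have hpre : {p : EucSp d × (EucSp d × EucSp d) | p.1 = w p.2.2}
        = (fun p : EucSp d × (EucSp d × EucSp d) => (p.1, p.2.2)) ⁻¹'
          {q : EucSp d × EucSp d | q.1 = w q.2} := rfl
    rw [hpre, ← Measure.map_apply meas_proj2 hTmeas, hα, map_compProd_prod_right, h2, hδT]
  have hae : ∀ᵐ p ∂α, p.1 = w p.2.2 := by
    rw [ae_iff]
    have : {p : EucSp d × (EucSp d × EucSp d) | ¬ p.1 = w p.2.2}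
        = {p : EucSp d × (EucSp d × EucSp d) | p.1 = w p.2.2}ᶜ := rfl
    rw [this, measure_compl hSmeas (measure_ne_top _ _), hαS, measure_univ, tsub_self]
  -- the integral computation
  have hγ₀α : γ₀ = α.map (fun p => (p.1, p.2.1)) := by
    rw [hα, map_compProd_prod_left, h1]
  have step1 : ∫ p, ⟪p.1, p.2⟫ ∂γ₀ = ∫ q, ⟪q.1, q.2.1⟫ ∂α := by
    rw [hγ₀α, integral_map meas_proj1.aemeasurable (asm_inner _)]
  have step2 : ∫ q, ⟪q.1, q.2.1⟫ ∂α = ∫ q, ⟪w q.2.2, q.2.1⟫ ∂α := by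
    refine integral_congr_ae ?_
    filter_upwards [hae] with p hp
    rw [hp]
  have step3 : ∫ q, ⟪w q.2.2, q.2.1⟫ ∂α = ∫ r, ⟪w r.2, r.1⟫ ∂π' := by
    rw [hπ', integral_map measurable_snd.aemeasurable]
    exact ((hwm.comp measurable_snd).inner measurable_fst).aestronglyMeasurable
  have step4 : ∫ r, ⟪w r.2, r.1⟫ ∂π' = ∫ p, ⟪w p.1, p.2⟫ ∂(π'.map Prod.swap) := by
    exact (show (∫ p, ⟪w p.1, p.2⟫ ∂(π'.map Prod.swap)) = ∫ r, ⟪w r.2, r.1⟫ ∂π' from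
      integral_map measurable_swap.aemeasurable
        ((hwm.comp measurable_fst).inner measurable_snd).aestronglyMeasurable).symm
  have hρ2 : Integrable (fun p : EucSp d × EucSp d => ‖p.2‖ ^ 2) (π'.map Prod.swap) := by
    refine (integrable_map_measure (μ := π') (f := Prod.swap)
      (g := fun p : EucSp d × EucSp d => ‖p.2‖ ^ 2)
      ((continuous_norm.pow 2).comp continuous_snd).aestronglyMeasurable
      measurable_swap.aemeasurable).mpr ?_
    exact integrable_comp_fst hπ'fst (asm_norm_sq ν₀) hν₀2
  have hfst' : (π'.map Prod.swap).fst = ν₁ := by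
    rw [Measure.fst_map_swap, snd_def, hπ'snd]
  have hgmem : MemLp w 2 ((π'.map Prod.swap).fst) := by
    rw [hfst']
    exact (memLp_two_iff_integrable_sq_norm hw.aestronglyMeasurable).mpr hw2
  have step5 := cross_eq (ρ := π'.map Prod.swap) hρ2 hgmem
  rw [hfst'] at step5
  refine ⟨π', inferInstance, ⟨hπ'fst, hπ'snd⟩, ?_⟩
  have hcb : condBary π' inferInstance = bar (π'.map Prod.swap) := rfl
  rw [hcb, step1, step2, step3, step4, step5]

/-! ### Basic facts about `W2sq` -/

lemma W2sq_set_bddBelow (μ ν : Measure (EucSp d)) :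
    BddBelow {r | ∃ γ : Measure (EucSp d × EucSp d), IsProbabilityMeasure γ ∧
      IsCoupling γ μ ν ∧ r = ∫ p, ‖p.1 - p.2‖ ^ 2 ∂γ} := by
  refine ⟨0, fun r hr => ?_⟩
  obtain ⟨γ, _, _, rfl⟩ := hr
  exact integral_nonneg fun p => sq_nonneg _

lemma W2sq_le_cost {μ ν : Measure (EucSp d)} (γ : Measure (EucSp d × EucSp d))
    [hγp : IsProbabilityMeasure γ] (hc : IsCoupling γ μ ν) :
    W2sq μ ν ≤ ∫ p, ‖p.1 - p.2‖ ^ 2 ∂γ :=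
  csInf_le (W2sq_set_bddBelow μ ν) ⟨γ, hγp, hc, rfl⟩

lemma le_W2sq {μ ν : Measure (EucSp d)} {C : ℝ}
    (hne : ∃ γ : Measure (EucSp d × EucSp d), IsProbabilityMeasure γ ∧ IsCoupling γ μ ν)
    (h : ∀ γ : Measure (EucSp d × EucSp d), IsProbabilityMeasure γ → IsCoupling γ μ ν →
      C ≤ ∫ p, ‖p.1 - p.2‖ ^ 2 ∂γ) :
    C ≤ W2sq μ ν := by
  refine le_csInf ?_ ?_
  · obtain ⟨γ, h1, h2⟩ := hne
    exact ⟨_, γ, h1, h2, rfl⟩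
  · rintro r ⟨γ, h1, h2, rfl⟩
    exact h γ h1 h2

lemma prod_coupling (μ ν : Measure (EucSp d)) [IsProbabilityMeasure μ]
    [IsProbabilityMeasure ν] : IsCoupling (μ.prod ν) μ ν := by
  constructor
  · rw [Measure.map_fst_prod]; simp
  · rw [Measure.map_snd_prod]; simp

/-! ### `L²` bridging lemmas -/

lemma norm_sq_Lp {ν : Measure (EucSp d)} (f : Lp (EucSp d) 2 ν) :
    ‖f‖ ^ 2 = ∫ x, ‖f x‖ ^ 2 ∂ν := by
  rw [← real_inner_self_eq_norm_sq, L2.inner_def]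
  exact integral_congr_ae (Filter.Eventually.of_forall fun x => real_inner_self_eq_norm_sq _)

lemma inner_Lp_eq {ν : Measure (EucSp d)} (f g : Lp (EucSp d) 2 ν) :
    ⟪f, g⟫ = ∫ x, ⟪f x, g x⟫ ∂ν := L2.inner_def f g

lemma inner_Lp_eq' {ν : Measure (EucSp d)} (f g : Lp (EucSp d) 2 ν)
    {f' g' : EucSp d → EucSp d} (hf : (f : EucSp d → EucSp d) =ᵐ[ν] f')
    (hg : (g : EucSp d → EucSp d) =ᵐ[ν] g') :
    ⟪f, g⟫ = ∫ x, ⟪f' x, g' x⟫ ∂ν := by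
  rw [inner_Lp_eq]
  refine integral_congr_ae ?_
  filter_upwards [hf, hg] with x h1 h2
  rw [h1, h2]

lemma memℒp_iff_int_sq {ν : Measure (EucSp d)} {f : EucSp d → EucSp d}
    (hf : AEStronglyMeasurable f ν) :
    MemLp f 2 ν ↔ Integrable (fun x => ‖f x‖ ^ 2) ν :=
  memLp_two_iff_integrable_sq_norm hf

/-! ### Mixtures and conditional barycenters -/

lemma bar_mix {ν₁ : Measure (EucSp d)} [IsProbabilityMeasure ν₁]
    (π π' : Measure (EucSp d × EucSp d)) [IsProbabilityMeasure π] [IsProbabilityMeasure π']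
    (hs : π.map Prod.snd = ν₁) (hs' : π'.map Prod.snd = ν₁)
    (hi : Integrable (fun p : EucSp d × EucSp d => ‖p.1‖ ^ 2) π)
    (hi' : Integrable (fun p : EucSp d × EucSp d => ‖p.1‖ ^ 2) π')
    {a b : ℝ} (ha : 0 < a) (hb : 0 < b) (hab : a + b = 1)
    (πm : Measure (EucSp d × EucSp d)) [IsProbabilityMeasure πm]
    (hπm : πm = (ENNReal.ofReal a) • π + (ENNReal.ofReal b) • π') :
    bar (πm.map Prod.swap) =ᵐ[ν₁]
      fun x => a • bar (π.map Prod.swap) x + b • bar (π'.map Prod.swap) x := by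
  set a' := ENNReal.ofReal a with ha'def
  set b' := ENNReal.ofReal b with hb'def
  have ha'0 : a' ≠ 0 := by simp [ha'def, ENNReal.ofReal_eq_zero, not_le, ha]
  have ha'top : a' ≠ ⊤ := ENNReal.ofReal_ne_top
  have hb'0 : b' ≠ 0 := by simp [hb'def, ENNReal.ofReal_eq_zero, not_le, hb]
  have hb'top : b' ≠ ⊤ := ENNReal.ofReal_ne_top
  have hab' : a' + b' = 1 := by
    rw [ha'def, hb'def, ← ENNReal.ofReal_add ha.le hb.le, hab, ENNReal.ofReal_one]
  set ρ := π.map Prod.swap with hρ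
  set ρ' := π'.map Prod.swap with hρ'
  set ρm := πm.map Prod.swap with hρm'
  have hρm : ρm = a' • ρ + b' • ρ' := by
    rw [hρm', hπm, Measure.map_add _ _ measurable_swap, Measure.map_smul, Measure.map_smul]
  have hρfst : ρ.fst = ν₁ := by rw [hρ, Measure.fst_map_swap, snd_def, hs]
  have hρ'fst : ρ'.fst = ν₁ := by rw [hρ', Measure.fst_map_swap, snd_def, hs']
  have hρmfst : ρm.fst = ν₁ := by
    rw [hρm, fst_def, Measure.map_add _ _ measurable_fst, Measure.map_smul, Measure.map_smul,
      ← fst_def, ← fst_def, hρfst, hρ'fst, ← add_smul, hab', one_smul]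
  set κ := ρ.condKernel with hκ
  set κ' := ρ'.condKernel with hκ'
  have hmeas : Measurable fun x => a' • κ x + b' • κ' x := by
    refine Measure.measurable_of_measurable_coe _ fun s hs => ?_
    simp only [Measure.coe_add, Measure.coe_smul, Pi.add_apply, Pi.smul_apply, smul_eq_mul]
    exact ((Kernel.measurable_coe κ hs).const_mul _).add
      ((Kernel.measurable_coe κ' hs).const_mul _)
  set ξ : Kernel (EucSp d) (EucSp d) := ⟨fun x => a' • κ x + b' • κ' x, hmeas⟩ with hξ
  have hξapp : ∀ x, ξ x = a' • κ x + b' • κ' x := fun x => rfl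
  haveI : IsMarkovKernel ξ := by
    refine ⟨fun x => ⟨?_⟩⟩
    rw [hξapp x]
    simp only [Measure.coe_add, Measure.coe_smul, Pi.add_apply, Pi.smul_apply, smul_eq_mul,
      measure_univ, mul_one]
    exact hab'
  have hcomp : ρm = ρm.fst ⊗ₘ ξ := by
    rw [hρmfst]
    ext s hsm
    rw [Measure.compProd_apply hsm, hρm]
    have hρs : ρ s = ∫⁻ x, κ x (Prod.mk x ⁻¹' s) ∂ν₁ := by
      conv_lhs => rw [← ρ.disintegrate ρ.condKernel]
      rw [Measure.compProd_apply hsm, hρfst]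
    have hρ's : ρ' s = ∫⁻ x, κ' x (Prod.mk x ⁻¹' s) ∂ν₁ := by
      conv_lhs => rw [← ρ'.disintegrate ρ'.condKernel]
      rw [Measure.compProd_apply hsm, hρ'fst]
    have hm1 : Measurable fun x => κ x (Prod.mk x ⁻¹' s) :=
      Kernel.measurable_kernel_prodMk_left hsm
    have hm2 : Measurable fun x => κ' x (Prod.mk x ⁻¹' s) :=
      Kernel.measurable_kernel_prodMk_left hsm
    calc (a' • ρ + b' • ρ') s = a' * ρ s + b' * ρ' s := by
          simp [Measure.coe_add, Measure.coe_smul]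
      _ = ∫⁻ x, (a' * κ x (Prod.mk x ⁻¹' s) + b' * κ' x (Prod.mk x ⁻¹' s)) ∂ν₁ := by
          rw [hρs, hρ's, lintegral_add_left (hm1.const_mul a'), lintegral_const_mul a' hm1,
            lintegral_const_mul b' hm2]
      _ = ∫⁻ x, ξ x (Prod.mk x ⁻¹' s) ∂ν₁ := by
          refine lintegral_congr fun x => ?_
          rw [hξapp x]
          simp [Measure.coe_add, Measure.coe_smul]
  have huniq := ProbabilityTheory.eq_condKernel_of_measure_eq_compProd ξ hcomp
  rw [hρmfst] at huniq
  have hρ2 : Integrable (fun p : EucSp d × EucSp d => ‖p.2‖ ^ 2) ρ := by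
    rw [hρ]
    exact (integrable_map_measure (μ := π) (f := Prod.swap)
      (g := fun p : EucSp d × EucSp d => ‖p.2‖ ^ 2)
      ((continuous_norm.pow 2).comp continuous_snd).aestronglyMeasurable
      measurable_swap.aemeasurable).mpr hi
  have hρ'2 : Integrable (fun p : EucSp d × EucSp d => ‖p.2‖ ^ 2) ρ' := by
    rw [hρ']
    exact (integrable_map_measure (μ := π') (f := Prod.swap)
      (g := fun p : EucSp d × EucSp d => ‖p.2‖ ^ 2)
      ((continuous_norm.pow 2).comp continuous_snd).aestronglyMeasurable
      measurable_swap.aemeasurable).mpr hi'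
  have h1 := ae_int_id (ρ := ρ) hρ2
  rw [hρfst] at h1
  have h1' := ae_int_id (ρ := ρ') hρ'2
  rw [hρ'fst] at h1'
  filter_upwards [huniq, h1, h1'] with x hx hxa hxb
  have : bar ρm x = ∫ y, y ∂(ξ x) := by rw [bar, ← hx]
  rw [this, hξapp x, integral_add_measure ((integrable_smul_measure ha'0 ha'top).mpr hxa)
    ((integrable_smul_measure hb'0 hb'top).mpr hxb), integral_smul_measure,
    integral_smul_measure, ha'def, hb'def, ENNReal.toReal_ofReal ha.le,
    ENNReal.toReal_ofReal hb.le]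
  rfl

/-! ### The convex set `KK` in `L²(ν₁)` -/

section Main

variable {t : ℝ} {ν₀ ν₁ : Measure (EucSp d)}
  [IsProbabilityMeasure ν₀] [IsProbabilityMeasure ν₁]

/-- The set of barycentric maps in `L²(ν₁)`. -/
def KK (t : ℝ) (ν₀ ν₁ : Measure (EucSp d)) : Set (Lp (EucSp d) 2 ν₁) :=
  {w | ∃ π : Measure (EucSp d × EucSp d), ∃ hπ : IsProbabilityMeasure π,
    IsCoupling π ν₀ ν₁ ∧ (w : EucSp d → EucSp d) =ᵐ[ν₁]
      fun x₁ => t • x₁ - (t - 1) • condBary π hπ x₁}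

lemma memℒp_id (h₁2 : Integrable (fun x => ‖x‖ ^ 2) ν₁) :
    MemLp (fun x : EucSp d => x) 2 ν₁ :=
  (memLp_two_iff_integrable_sq_norm aestronglyMeasurable_id).mpr h₁2

lemma memℒp_bar_of_coupling (π : Measure (EucSp d × EucSp d)) [IsProbabilityMeasure π]
    (hc : IsCoupling π ν₀ ν₁) (h₀2 : Integrable (fun x => ‖x‖ ^ 2) ν₀) :
    MemLp (bar (π.map Prod.swap)) 2 ν₁ := by
  have hρ2 : Integrable (fun p : EucSp d × EucSp d => ‖p.2‖ ^ 2) (π.map Prod.swap) :=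
    (integrable_map_measure (μ := π) (f := Prod.swap)
      (g := fun p : EucSp d × EucSp d => ‖p.2‖ ^ 2)
      ((continuous_norm.pow 2).comp continuous_snd).aestronglyMeasurable
      measurable_swap.aemeasurable).mpr (integrable_comp_fst hc.1 (asm_norm_sq ν₀) h₀2)
  have := memℒp_bar hρ2
  rwa [Measure.fst_map_swap, snd_def, hc.2] at this

lemma memℒp_Tf (π : Measure (EucSp d × EucSp d)) [IsProbabilityMeasure π]
    (hc : IsCoupling π ν₀ ν₁) (h₀2 : Integrable (fun x => ‖x‖ ^ 2) ν₀)
    (h₁2 : Integrable (fun x => ‖x‖ ^ 2) ν₁) :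
    MemLp (fun x₁ : EucSp d => t • x₁ - (t - 1) • bar (π.map Prod.swap) x₁) 2 ν₁ :=
  ((memℒp_id h₁2).const_smul t).sub ((memℒp_bar_of_coupling π hc h₀2).const_smul (t - 1))

lemma KK_nonempty (h₀2 : Integrable (fun x => ‖x‖ ^ 2) ν₀)
    (h₁2 : Integrable (fun x => ‖x‖ ^ 2) ν₁) : (KK t ν₀ ν₁).Nonempty := by
  have hc := prod_coupling ν₀ ν₁
  refine ⟨(memℒp_Tf (t := t) (ν₀.prod ν₁) hc h₀2 h₁2).toLp _, (ν₀.prod ν₁), inferInstance, hc, ?_⟩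
  exact (memℒp_Tf (t := t) (ν₀.prod ν₁) hc h₀2 h₁2).coeFn_toLp

lemma norm_sq_of_mem {w : Lp (EucSp d) 2 ν₁} {π : Measure (EucSp d × EucSp d)}
    {hπ : IsProbabilityMeasure π}
    (hae : (w : EucSp d → EucSp d) =ᵐ[ν₁]
      fun x₁ => t • x₁ - (t - 1) • condBary π hπ x₁) :
    ‖w‖ ^ 2 = ∫ x₁, ‖t • x₁ - (t - 1) • condBary π hπ x₁‖ ^ 2 ∂ν₁ := by
  rw [norm_sq_Lp]
  refine integral_congr_ae (hae.mono fun x hx => ?_)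
  simp only []
  rw [hx]

lemma BVal_eq_KK (h₀2 : Integrable (fun x => ‖x‖ ^ 2) ν₀)
    (h₁2 : Integrable (fun x => ‖x‖ ^ 2) ν₁) :
    BVal t ν₀ ν₁ = sInf ((fun w : Lp (EucSp d) 2 ν₁ => ‖w‖ ^ 2) '' KK t ν₀ ν₁) := by
  unfold BVal
  congr 1
  ext r
  constructor
  · rintro ⟨π, hπ, hc, rfl⟩
    haveI := hπ
    have hcb : condBary π hπ = bar (π.map Prod.swap) := rfl
    refine ⟨(memℒp_Tf (t := t) π hc h₀2 h₁2).toLp _, ⟨π, hπ, hc, ?_⟩, ?_⟩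
    · rw [hcb]
      exact (memℒp_Tf (t := t) π hc h₀2 h₁2).coeFn_toLp
    · exact norm_sq_of_mem (hπ := hπ)
        (by rw [hcb]; exact (memℒp_Tf (t := t) π hc h₀2 h₁2).coeFn_toLp)
  · rintro ⟨w, ⟨π, hπ, hc, hae⟩, rfl⟩
    exact ⟨π, hπ, hc, norm_sq_of_mem hae⟩

lemma KK_convex (h₀2 : Integrable (fun x => ‖x‖ ^ 2) ν₀)
    (h₁2 : Integrable (fun x => ‖x‖ ^ 2) ν₁) : Convex ℝ (KK t ν₀ ν₁) := by
  rintro w hw w' hw' a b ha hb hab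
  rcases eq_or_lt_of_le ha with h|h
  · have hb1 : b = 1 := by linarith
    have : a • w + b • w' = w' := by rw [← h, hb1, zero_smul, one_smul, zero_add]
    rw [this]
    exact hw'
  rcases eq_or_lt_of_le hb with h'|h'
  · have ha1 : a = 1 := by linarith
    have : a • w + b • w' = w := by rw [← h', ha1, zero_smul, one_smul, add_zero]
    rw [this]
    exact hw
  obtain ⟨π, hπ, hc, hae⟩ := hw
  obtain ⟨π', hπ', hc', hae'⟩ := hw'
  haveI := hπ
  haveI := hπ'
  set a' := ENNReal.ofReal a
  set b' := ENNReal.ofReal b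
  have hab' : a' + b' = 1 := by
    rw [← ENNReal.ofReal_add ha hb, hab, ENNReal.ofReal_one]
  set πm := a' • π + b' • π' with hπmdef
  haveI hπm : IsProbabilityMeasure πm := by
    constructor
    rw [hπmdef]
    simp only [Measure.coe_add, Measure.coe_smul, Pi.add_apply, Pi.smul_apply, smul_eq_mul,
      measure_univ, mul_one]
    exact hab'
  have hcm : IsCoupling πm ν₀ ν₁ := by
    constructor
    · rw [hπmdef, Measure.map_add _ _ measurable_fst, Measure.map_smul, Measure.map_smul,
        hc.1, hc'.1, ← add_smul, hab', one_smul]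
    · rw [hπmdef, Measure.map_add _ _ measurable_snd, Measure.map_smul, Measure.map_smul,
        hc.2, hc'.2, ← add_smul, hab', one_smul]
  have hi : Integrable (fun p : EucSp d × EucSp d => ‖p.1‖ ^ 2) π :=
    integrable_comp_fst hc.1 (asm_norm_sq ν₀) h₀2
  have hi' : Integrable (fun p : EucSp d × EucSp d => ‖p.1‖ ^ 2) π' :=
    integrable_comp_fst hc'.1 (asm_norm_sq ν₀) h₀2
  have hmix := bar_mix π π' hc.2 hc'.2 hi hi' h h' hab πm rfl
  refine ⟨πm, hπm, hcm, ?_⟩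
  have hcb : condBary πm hπm = bar (πm.map Prod.swap) := rfl
  rw [hcb]
  have hcb1 : condBary π hπ = bar (π.map Prod.swap) := rfl
  have hcb2 : condBary π' hπ' = bar (π'.map Prod.swap) := rfl
  rw [hcb1] at hae
  rw [hcb2] at hae'
  filter_upwards [Lp.coeFn_add (a • w) (b • w'), Lp.coeFn_smul a w, Lp.coeFn_smul b w',
    hae, hae', hmix] with x h1 h2 h3 h4 h5 h6
  rw [h1]
  simp only [Pi.add_apply]
  rw [h2, h3]
  simp only [Pi.smul_apply]
  rw [h4, h5, h6]
  set u := bar (π.map Prod.swap) x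
  set u' := bar (π'.map Prod.swap) x
  have key : ∀ v z z' : EucSp d, a • (v - z) + b • (v - z') = v - (a • z + b • z') := by
    intro v z z'
    have hv : a • v + b • v = v := by rw [← add_smul, hab, one_smul]
    calc a • (v - z) + b • (v - z') = (a • v + b • v) - (a • z + b • z') := by
          rw [smul_sub, smul_sub]; abel
      _ = v - (a • z + b • z') := by rw [hv]
  rw [key (t • x) ((t-1) • u) ((t-1) • u')]
  have : (t-1) • (a • u + b • u') = a • ((t-1) • u) + b • ((t-1) • u') := by
    rw [smul_add, smul_comm (t-1) a, smul_comm (t-1) b]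
  rw [this]

lemma exists_proj (h₀2 : Integrable (fun x => ‖x‖ ^ 2) ν₀)
    (h₁2 : Integrable (fun x => ‖x‖ ^ 2) ν₁) :
    ∃ v : Lp (EucSp d) 2 ν₁, ‖v‖ ^ 2 = BVal t ν₀ ν₁ ∧
      ∀ w ∈ KK t ν₀ ν₁, BVal t ν₀ ν₁ ≤ ⟪v, w⟫ := by
  set K := closure (KK t ν₀ ν₁) with hK
  have hKc : Convex ℝ K := (KK_convex h₀2 h₁2).closure
  have hne : K.Nonempty := (KK_nonempty h₀2 h₁2).closure
  obtain ⟨v, hvK, hv⟩ :=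
    exists_norm_eq_iInf_of_complete_convex hne isClosed_closure.isComplete hKc 0
  have hvle : ∀ w ∈ K, ‖v‖ ≤ ‖w‖ := by
    intro w hw
    have h1 : (⨅ w : K, ‖(0 : Lp (EucSp d) 2 ν₁) - w‖) ≤ ‖(0 : Lp (EucSp d) 2 ν₁) - w‖ :=
      ciInf_le ⟨0, by rintro r ⟨q, rfl⟩; exact norm_nonneg _⟩ (⟨w, hw⟩ : K)
    rw [← hv] at h1
    simpa using h1
  have hvar : ∀ w ∈ KK t ν₀ ν₁, ‖v‖ ^ 2 ≤ ⟪v, w⟫ := by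
    intro w hw
    have h2 := (norm_eq_iInf_iff_real_inner_le_zero hKc hvK).mp hv w (subset_closure hw)
    have h3 : ⟪(0 : Lp (EucSp d) 2 ν₁) - v, w - v⟫ = -⟪v, w⟫ + ‖v‖ ^ 2 := by
      rw [zero_sub, inner_neg_left, inner_sub_right, real_inner_self_eq_norm_sq]
      ring
    rw [h3] at h2
    linarith
  have hBle : ‖v‖ ^ 2 ≤ BVal t ν₀ ν₁ := by
    rw [BVal_eq_KK h₀2 h₁2]
    refine le_csInf ((KK_nonempty h₀2 h₁2).image _) ?_
    rintro r ⟨w, hw, rfl⟩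
    have := hvle w (subset_closure hw)
    show ‖v‖ ^ 2 ≤ ‖w‖ ^ 2
    nlinarith [norm_nonneg v, norm_nonneg w]
  have hBge : BVal t ν₀ ν₁ ≤ ‖v‖ ^ 2 := by
    refine le_of_forall_pos_le_add fun ε hε => ?_
    have hδpos : (0:ℝ) < min 1 (ε / (2 * ‖v‖ + 1)) := lt_min one_pos (by positivity)
    obtain ⟨w, hwKK, hwv⟩ := Metric.mem_closure_iff.mp hvK _ hδpos
    set δ := min 1 (ε / (2 * ‖v‖ + 1)) with hδdef
    have hdist : ‖w - v‖ < δ := by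
      rw [← dist_eq_norm, dist_comm]
      exact hwv
    have h4 : ‖w‖ ≤ ‖v‖ + δ := by
      calc ‖w‖ = ‖(w - v) + v‖ := by rw [sub_add_cancel]
        _ ≤ ‖w - v‖ + ‖v‖ := norm_add_le _ _
        _ ≤ ‖v‖ + δ := by linarith
    have h5 : BVal t ν₀ ν₁ ≤ ‖w‖ ^ 2 := by
      rw [BVal_eq_KK h₀2 h₁2]
      refine csInf_le ⟨0, ?_⟩ ⟨w, hwKK, rfl⟩
      rintro r ⟨q, _, rfl⟩
      positivity
    have hδ1 : δ ≤ 1 := min_le_left _ _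
    have hδ2 : δ ≤ ε / (2 * ‖v‖ + 1) := min_le_right _ _
    have hv0 : (0:ℝ) ≤ ‖v‖ := norm_nonneg v
    have hδε : δ * (2 * ‖v‖ + 1) ≤ ε := by
      rw [← le_div_iff₀ (by positivity : (0:ℝ) < 2 * ‖v‖ + 1)]
      exact hδ2
    have hsq : (‖v‖ + δ) ^ 2 ≤ ‖v‖ ^ 2 + ε := by nlinarith
    have : ‖w‖ ^ 2 ≤ (‖v‖ + δ) ^ 2 := by nlinarith [norm_nonneg w]
    linarith
  have hB : ‖v‖ ^ 2 = BVal t ν₀ ν₁ := le_antisymm hBle hBge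
  exact ⟨v, hB, fun w hw => hB ▸ hvar w hw⟩

lemma scalar1 {t C₁ W₀ M₁ M₀ B : ℝ} (ht : 1 < t)
    (key : 0 ≤ t * C₁ - t * M₁ + (t - 1) * M₀ + B - (t - 1) * W₀) :
    ((1 / (2 * (t - 1))) * M₁ - (1 / (2 * t)) * M₀ - (1 / (2 * t * (t - 1))) * B) + W₀ / (2 * t)
      ≤ C₁ / (2 * (t - 1)) := by
  have ht0 : (0:ℝ) < t := by linarith
  have ht1 : (0:ℝ) < t - 1 := by linarith
  rw [← sub_nonneg]
  have expand : C₁ / (2 * (t - 1))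
      - (((1 / (2 * (t - 1))) * M₁ - (1 / (2 * t)) * M₀ - (1 / (2 * t * (t - 1))) * B)
        + W₀ / (2 * t))
      = (t * C₁ - t * M₁ + (t - 1) * M₀ + B - (t - 1) * W₀) / (2 * t * (t - 1)) := by
    field_simp
    ring
  rw [expand]
  exact div_nonneg key (by positivity)

/-- Direction I: every `μ ∈ P2` satisfies the lower bound. -/
lemma dir1 (ht : 1 < t) (h₀2 : Integrable (fun x => ‖x‖ ^ 2) ν₀)
    (h₁2 : Integrable (fun x => ‖x‖ ^ 2) ν₁)
    (μ : Measure (EucSp d)) [IsProbabilityMeasure μ]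
    (hμ2 : Integrable (fun x => ‖x‖ ^ 2) μ) :
    -(1 / (2 * t * (t - 1))) * BVal t ν₀ ν₁
      + (1 / (2 * (t - 1))) * ∫ x, ‖x‖ ^ 2 ∂ν₁
      - (1 / (2 * t)) * ∫ x, ‖x‖ ^ 2 ∂ν₀ ≤ Ft t ν₀ ν₁ μ := by
  have ht0 : (0:ℝ) < t := by linarith
  have ht1 : (0:ℝ) < t - 1 := by linarith
  set M₁ := ∫ x, ‖x‖ ^ 2 ∂ν₁ with hM₁
  set M₀ := ∫ x, ‖x‖ ^ 2 ∂ν₀ with hM₀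
  set Mμ := ∫ x, ‖x‖ ^ 2 ∂μ with hMμ
  have core : ∀ (π : Measure (EucSp d × EucSp d)) (hπ : IsProbabilityMeasure π),
      IsCoupling π ν₀ ν₁ →
      (1 / (2 * (t - 1))) * M₁ - (1 / (2 * t)) * M₀
        - (1 / (2 * t * (t - 1))) * (∫ x₁, ‖t • x₁ - (t - 1) • condBary π hπ x₁‖ ^ 2 ∂ν₁)
        ≤ Ft t ν₀ ν₁ μ := by
    intro π hπ hcπ
    haveI := hπ
    have hcb : condBary π hπ = bar (π.map Prod.swap) := rfl
    rw [hcb]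
    set ρb := π.map Prod.swap with hρb
    set bf := bar ρb with hbf
    set B := ∫ x₁, ‖t • x₁ - (t - 1) • bf x₁‖ ^ 2 ∂ν₁ with hB
    set W₀ := W2sq μ ν₀ with hW₀
    have hρbfst : ρb.fst = ν₁ := by rw [hρb, Measure.fst_map_swap, snd_def, hcπ.2]
    have hρb2 : Integrable (fun p : EucSp d × EucSp d => ‖p.2‖ ^ 2) ρb := by
      rw [hρb]
      exact (integrable_map_measure (μ := π) (f := Prod.swap)
        (g := fun p : EucSp d × EucSp d => ‖p.2‖ ^ 2)
        ((continuous_norm.pow 2).comp continuous_snd).aestronglyMeasurable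
        measurable_swap.aemeasurable).mpr (integrable_comp_fst hcπ.1 (asm_norm_sq ν₀) h₀2)
    have percoup : ∀ (γ₁ : Measure (EucSp d × EucSp d)), IsProbabilityMeasure γ₁ →
        IsCoupling γ₁ μ ν₁ →
        ((1 / (2 * (t - 1))) * M₁ - (1 / (2 * t)) * M₀ - (1 / (2 * t * (t - 1))) * B
          + W₀ / (2 * t)) * (2 * (t - 1)) ≤ ∫ p, ‖p.1 - p.2‖ ^ 2 ∂γ₁ := by
      intro γ₁ hγ₁p hγ₁c
      haveI := hγ₁p
      set ρc := γ₁.map Prod.swap with hρc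
      set cf := bar ρc with hcf
      have hρcfst : ρc.fst = ν₁ := by rw [hρc, Measure.fst_map_swap, snd_def, hγ₁c.2]
      have hρc2 : Integrable (fun p : EucSp d × EucSp d => ‖p.2‖ ^ 2) ρc := by
        rw [hρc]
        exact (integrable_map_measure (μ := γ₁) (f := Prod.swap)
          (g := fun p : EucSp d × EucSp d => ‖p.2‖ ^ 2)
          ((continuous_norm.pow 2).comp continuous_snd).aestronglyMeasurable
          measurable_swap.aemeasurable).mpr (integrable_comp_fst hγ₁c.1 (asm_norm_sq μ) hμ2)
      obtain ⟨γ₀, hγ₀p, hγ₀c, hγ₀i⟩ := glue1 γ₁ π hγ₁c hcπ hμ2 h₀2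
      haveI := hγ₀p
      have hW₀le : W₀ ≤ ∫ p, ‖p.1 - p.2‖ ^ 2 ∂γ₀ := W2sq_le_cost γ₀ hγ₀c
      have hC₀ : ∫ p, ‖p.1 - p.2‖ ^ 2 ∂γ₀
          = Mμ + M₀ - 2 * ∫ x, ⟪cf x, bf x⟫ ∂ν₁ := by
        rw [cost_expand hγ₀c hμ2 h₀2, hγ₀i]
      have hC₁ : ∫ p, ‖p.1 - p.2‖ ^ 2 ∂γ₁
          = Mμ + M₁ - 2 * ∫ x, ⟪cf x, x⟫ ∂ν₁ := by
        rw [cost_expand hγ₁c hμ2 h₁2]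
        have e1 : ∫ p, ⟪p.1, p.2⟫ ∂ρc = ∫ p, ⟪p.2, p.1⟫ ∂γ₁ := by
          rw [hρc]
          exact integral_map measurable_swap.aemeasurable (asm_inner _)
        have e2 : ∫ p, ⟪p.2, p.1⟫ ∂γ₁ = ∫ p, ⟪p.1, p.2⟫ ∂γ₁ :=
          integral_congr_ae (Filter.Eventually.of_forall fun p => real_inner_comm _ _)
        have hgid : MemLp (fun x : EucSp d => x) 2 ρc.fst := by
          rw [hρcfst]; exact memℒp_id h₁2
        have e3 := cross_eq (ρ := ρc) hρc2 hgid
        rw [hρcfst] at e3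
        have e4 : ∫ x, ⟪x, bar ρc x⟫ ∂ν₁ = ∫ x, ⟪cf x, x⟫ ∂ν₁ :=
          integral_congr_ae (Filter.Eventually.of_forall fun x => real_inner_comm _ _)
        rw [← e2, ← e1, e3, e4]
      have hMc : Integrable (fun x => ‖cf x‖ ^ 2) ν₁ := by
        have := integrable_bar_sq (ρ := ρc) hρc2
        rwa [hρcfst] at this
      have hMb : Integrable (fun x => ‖bf x‖ ^ 2) ν₁ := by
        have := integrable_bar_sq (ρ := ρb) hρb2
        rwa [hρbfst] at this
      have hTmem : MemLp (fun x₁ : EucSp d => t • x₁ - (t - 1) • bf x₁) 2 ν₁ :=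
        memℒp_Tf π hcπ h₀2 h₁2
      have hT2 : Integrable (fun x => ‖t • x - (t - 1) • bf x‖ ^ 2) ν₁ :=
        (memLp_two_iff_integrable_sq_norm hTmem.aestronglyMeasurable).mp hTmem
      have hcasm : AEStronglyMeasurable cf ν₁ := stronglyMeasurable_bar.aestronglyMeasurable
      have hbasm : AEStronglyMeasurable bf ν₁ := stronglyMeasurable_bar.aestronglyMeasurable
      have hTasm : AEStronglyMeasurable (fun x₁ : EucSp d => t • x₁ - (t - 1) • bf x₁) ν₁ :=
        hTmem.aestronglyMeasurable
      have hI1int : Integrable (fun x => ⟪cf x, x⟫) ν₁ :=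
        integrable_inner_of_sq hMc h₁2 hcasm aestronglyMeasurable_id
      have hI2int : Integrable (fun x => ⟪cf x, bf x⟫) ν₁ :=
        integrable_inner_of_sq hMc hMb hcasm hbasm
      have hEint : Integrable (fun x => ⟪cf x, t • x - (t - 1) • bf x⟫) ν₁ :=
        integrable_inner_of_sq hMc hT2 hcasm hTasm
      have f4 : 0 ≤ (∫ x, ‖cf x‖ ^ 2 ∂ν₁)
          - 2 * (∫ x, ⟪cf x, t • x - (t - 1) • bf x⟫ ∂ν₁) + B := by
        have hpt : ∀ x : EucSp d, ‖cf x - (t • x - (t - 1) • bf x)‖ ^ 2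
            = ‖cf x‖ ^ 2 - 2 * ⟪cf x, t • x - (t - 1) • bf x⟫
              + ‖t • x - (t - 1) • bf x‖ ^ 2 := by
          intro x
          have := norm_sub_sq_real (cf x) (t • x - (t - 1) • bf x)
          linarith
        have hnn : 0 ≤ ∫ x, ‖cf x - (t • x - (t - 1) • bf x)‖ ^ 2 ∂ν₁ :=
          integral_nonneg fun x => sq_nonneg _
        have heq : ∫ x, ‖cf x - (t • x - (t - 1) • bf x)‖ ^ 2 ∂ν₁
            = (∫ x, ‖cf x‖ ^ 2 ∂ν₁)
              - 2 * (∫ x, ⟪cf x, t • x - (t - 1) • bf x⟫ ∂ν₁) + B := by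
          rw [integral_congr_ae (Filter.Eventually.of_forall hpt)]
          have h12 : Integrable (fun x => ‖cf x‖ ^ 2
              - 2 * ⟪cf x, t • x - (t - 1) • bf x⟫) ν₁ := hMc.sub (hEint.const_mul 2)
          rw [integral_add h12 hT2, integral_sub hMc (hEint.const_mul 2), integral_const_mul]
        rw [heq] at hnn
        linarith
      have f5 : ∫ x, ⟪cf x, t • x - (t - 1) • bf x⟫ ∂ν₁
          = t * (∫ x, ⟪cf x, x⟫ ∂ν₁) - (t - 1) * ∫ x, ⟪cf x, bf x⟫ ∂ν₁ := by
        have hpt : ∀ x : EucSp d, ⟪cf x, t • x - (t - 1) • bf x⟫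
            = t * ⟪cf x, x⟫ - (t - 1) * ⟪cf x, bf x⟫ := by
          intro x
          rw [inner_sub_right, real_inner_smul_right, real_inner_smul_right]
        rw [integral_congr_ae (Filter.Eventually.of_forall hpt),
          integral_sub (hI1int.const_mul t) (hI2int.const_mul (t - 1)),
          integral_const_mul, integral_const_mul]
      have f3 : ∫ x, ‖cf x‖ ^ 2 ∂ν₁ ≤ Mμ := by
        have h6 := integral_bar_sq_le (ρ := ρc) hρc2
        rw [hρcfst] at h6
        have h7 : ∫ p, ‖p.2‖ ^ 2 ∂ρc = Mμ := by
          have e5 : ∫ p, ‖p.2‖ ^ 2 ∂ρc = ∫ p, ‖p.1‖ ^ 2 ∂γ₁ := by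
            rw [hρc]
            exact integral_map measurable_swap.aemeasurable
              ((continuous_norm.pow 2).comp continuous_snd).aestronglyMeasurable
          rw [e5]
          exact (integral_comp_fst hγ₁c.1 (asm_norm_sq μ)).symm
        rw [h7] at h6
        exact h6
      have hW₀le' : W₀ ≤ Mμ + M₀ - 2 * ∫ x, ⟪cf x, bf x⟫ ∂ν₁ := by
        rw [← hC₀]; exact hW₀le
      have key : 0 ≤ t * (∫ p, ‖p.1 - p.2‖ ^ 2 ∂γ₁) - t * M₁ + (t - 1) * M₀ + B
          - (t - 1) * W₀ := by
        nlinarith [mul_nonneg ht1.le (sub_nonneg.2 hW₀le'), f4, f5, f3, hC₁]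
      have hs1 := scalar1 ht key
      exact (le_div_iff₀ (by positivity)).mp hs1
    have hW₁ : ((1 / (2 * (t - 1))) * M₁ - (1 / (2 * t)) * M₀ - (1 / (2 * t * (t - 1))) * B
        + W₀ / (2 * t)) * (2 * (t - 1)) ≤ W2sq μ ν₁ :=
      le_W2sq ⟨μ.prod ν₁, inferInstance, prod_coupling μ ν₁⟩ percoup
    have hW₁' : (1 / (2 * (t - 1))) * M₁ - (1 / (2 * t)) * M₀ - (1 / (2 * t * (t - 1))) * B
        + W₀ / (2 * t) ≤ W2sq μ ν₁ / (2 * (t - 1)) := (le_div_iff₀ (by positivity)).mpr hW₁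
    rw [Ft]
    linarith
  set c := 2 * t * (t - 1) with hc
  have hcpos : (0:ℝ) < c := by rw [hc]; positivity
  have hSne : {r | ∃ π : Measure (EucSp d × EucSp d), ∃ hπ : IsProbabilityMeasure π,
      IsCoupling π ν₀ ν₁ ∧
        r = ∫ x₁, ‖t • x₁ - (t - 1) • condBary π hπ x₁‖ ^ 2 ∂ν₁}.Nonempty :=
    ⟨_, ν₀.prod ν₁, inferInstance, prod_coupling _ _, rfl⟩
  have hclaim : ∀ r ∈ {r | ∃ π : Measure (EucSp d × EucSp d), ∃ hπ : IsProbabilityMeasure π,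
      IsCoupling π ν₀ ν₁ ∧
        r = ∫ x₁, ‖t • x₁ - (t - 1) • condBary π hπ x₁‖ ^ 2 ∂ν₁},
      ((1 / (2 * (t - 1))) * M₁ - (1 / (2 * t)) * M₀ - Ft t ν₀ ν₁ μ) * c ≤ r := by
    rintro r ⟨π, hπ, hcπ, rfl⟩
    have h9 := core π hπ hcπ
    have h10 : (1 / (2 * (t - 1))) * M₁ - (1 / (2 * t)) * M₀ - Ft t ν₀ ν₁ μ
        ≤ (∫ x₁, ‖t • x₁ - (t - 1) • condBary π hπ x₁‖ ^ 2 ∂ν₁) / c := by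
      have heq2 : (1 / c) * (∫ x₁, ‖t • x₁ - (t - 1) • condBary π hπ x₁‖ ^ 2 ∂ν₁)
          = (∫ x₁, ‖t • x₁ - (t - 1) • condBary π hπ x₁‖ ^ 2 ∂ν₁) / c := by
        rw [one_div, div_eq_mul_inv, mul_comm]
      rw [← heq2]
      linarith
    exact (le_div_iff₀ hcpos).mp h10
  have hBVal : ((1 / (2 * (t - 1))) * M₁ - (1 / (2 * t)) * M₀ - Ft t ν₀ ν₁ μ) * c
      ≤ BVal t ν₀ ν₁ := le_csInf hSne hclaim
  have h11 : (1 / (2 * (t - 1))) * M₁ - (1 / (2 * t)) * M₀ - Ft t ν₀ ν₁ μ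
      ≤ BVal t ν₀ ν₁ / c := (le_div_iff₀ hcpos).mpr hBVal
  have h12 : BVal t ν₀ ν₁ / c = (1 / c) * BVal t ν₀ ν₁ := by
    rw [one_div, div_eq_mul_inv, mul_comm]
  rw [h12] at h11
  linarith

/-- Direction II: the projection point realizes the infimum value. -/
lemma dir2 (ht : 1 < t) (h₀2 : Integrable (fun x => ‖x‖ ^ 2) ν₀)
    (h₁2 : Integrable (fun x => ‖x‖ ^ 2) ν₁) :
    ∃ μ : Measure (EucSp d), IsProbabilityMeasure μ ∧ Integrable (fun x => ‖x‖ ^ 2) μ ∧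
      Ft t ν₀ ν₁ μ ≤ -(1 / (2 * t * (t - 1))) * BVal t ν₀ ν₁
        + (1 / (2 * (t - 1))) * ∫ x, ‖x‖ ^ 2 ∂ν₁
        - (1 / (2 * t)) * ∫ x, ‖x‖ ^ 2 ∂ν₀ := by
  have ht0 : (0:ℝ) < t := by linarith
  have ht1 : (0:ℝ) < t - 1 := by linarith
  obtain ⟨v, hvnorm, hvar⟩ := exists_proj (t := t) h₀2 h₁2
  set w : EucSp d → EucSp d := ⇑v with hwdef
  have hwsm : StronglyMeasurable w := Lp.stronglyMeasurable v
  have hwmem : MemLp w 2 ν₁ := Lp.memLp v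
  have hw2 : Integrable (fun x => ‖w x‖ ^ 2) ν₁ :=
    (memLp_two_iff_integrable_sq_norm hwmem.aestronglyMeasurable).mp hwmem
  set μs := ν₁.map w with hμsdef
  haveI : IsProbabilityMeasure μs := Measure.isProbabilityMeasure_map hwsm.measurable.aemeasurable
  have hμs2 : Integrable (fun x => ‖x‖ ^ 2) μs := by
    rw [hμsdef]
    exact (integrable_map_measure (asm_norm_sq _) hwsm.measurable.aemeasurable).mpr hw2
  set M₁ := ∫ x, ‖x‖ ^ 2 ∂ν₁ with hM₁
  set M₀ := ∫ x, ‖x‖ ^ 2 ∂ν₀ with hM₀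
  set BV := BVal t ν₀ ν₁ with hBV
  set I := ∫ x, ⟪w x, x⟫ ∂ν₁ with hI
  have hMμs : ∫ x, ‖x‖ ^ 2 ∂μs = BV := by
    rw [hμsdef, integral_map hwsm.measurable.aemeasurable (asm_norm_sq _), ← hvnorm,
      norm_sq_Lp]
  -- upper bound on W2sq μs ν₁ via the deterministic coupling
  have hF : Measurable fun x : EucSp d => (w x, x) := hwsm.measurable.prodMk measurable_id
  set δ := ν₁.map (fun x => (w x, x)) with hδdef
  haveI : IsProbabilityMeasure δ := Measure.isProbabilityMeasure_map hF.aemeasurable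
  have hδc : IsCoupling δ μs ν₁ := by
    constructor
    · rw [hδdef, Measure.map_map measurable_fst hF, hμsdef]
      rfl
    · rw [hδdef, Measure.map_map measurable_snd hF]
      exact Measure.map_id
  have hup : W2sq μs ν₁ ≤ ∫ x, ‖w x - x‖ ^ 2 ∂ν₁ := by
    have h1 := W2sq_le_cost δ hδc
    have h2 : ∫ p, ‖p.1 - p.2‖ ^ 2 ∂δ = ∫ x, ‖w x - x‖ ^ 2 ∂ν₁ := by
      rw [hδdef]
      exact integral_map hF.aemeasurable
        ((continuous_norm.pow 2).comp (continuous_fst.sub continuous_snd)).aestronglyMeasurable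
    rw [h2] at h1
    exact h1
  have hIint : Integrable (fun x => ⟪w x, x⟫) ν₁ :=
    integrable_inner_of_sq hw2 h₁2 hwmem.aestronglyMeasurable aestronglyMeasurable_id
  have hC1 : ∫ x, ‖w x - x‖ ^ 2 ∂ν₁ = BV + M₁ - 2 * I := by
    have hpt : ∀ x : EucSp d, ‖w x - x‖ ^ 2 = ‖w x‖ ^ 2 + ‖x‖ ^ 2 - 2 * ⟪w x, x⟫ := by
      intro x
      have := norm_sub_sq_real (w x) x
      linarith
    rw [integral_congr_ae (Filter.Eventually.of_forall hpt)]
    have h12 : Integrable (fun x : EucSp d => ‖w x‖ ^ 2 + ‖x‖ ^ 2) ν₁ := hw2.add h₁2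
    rw [integral_sub h12 (hIint.const_mul 2), integral_add hw2 h₁2, integral_const_mul]
    have hBVw : ∫ x, ‖w x‖ ^ 2 ∂ν₁ = BV := by rw [← hvnorm, norm_sq_Lp]
    rw [hBVw, ← hM₁, ← hI]
  -- lower bound on W2sq μs ν₀
  have hlow : BV + M₀ - 2 * ((t * I - BV) / (t - 1)) ≤ W2sq μs ν₀ := by
    refine le_W2sq ⟨μs.prod ν₀, inferInstance, prod_coupling _ _⟩ ?_
    intro γ₀ hγ₀p hγ₀c
    haveI := hγ₀p
    obtain ⟨π', hπ', hcπ', hint⟩ := glue2 hwsm hw2 h₀2 γ₀ hγ₀c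
    haveI := hπ'
    have hcost := cost_expand hγ₀c hμs2 h₀2
    rw [hMμs, hint] at hcost
    rw [hcost]
    have hcb : condBary π' hπ' = bar (π'.map Prod.swap) := rfl
    set bf := bar (π'.map Prod.swap) with hbf
    have hw' : (memℒp_Tf (t := t) π' hcπ' h₀2 h₁2).toLp _ ∈ KK t ν₀ ν₁ :=
      ⟨π', hπ', hcπ', (memℒp_Tf (t := t) π' hcπ' h₀2 h₁2).coeFn_toLp⟩
    have hvw := hvar _ hw'
    have hinner : ⟪v, (memℒp_Tf (t := t) π' hcπ' h₀2 h₁2).toLp _⟫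
        = ∫ x, ⟪w x, t • x - (t - 1) • bf x⟫ ∂ν₁ :=
      inner_Lp_eq' v _ (Filter.EventuallyEq.refl _ _)
        (memℒp_Tf (t := t) π' hcπ' h₀2 h₁2).coeFn_toLp
    rw [hinner] at hvw
    have hρ'2 : Integrable (fun p : EucSp d × EucSp d => ‖p.2‖ ^ 2) (π'.map Prod.swap) :=
      (integrable_map_measure (μ := π') (f := Prod.swap)
        (g := fun p : EucSp d × EucSp d => ‖p.2‖ ^ 2)
        ((continuous_norm.pow 2).comp continuous_snd).aestronglyMeasurable
        measurable_swap.aemeasurable).mpr (integrable_comp_fst hcπ'.1 (asm_norm_sq ν₀) h₀2)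
    have hMb' : Integrable (fun x => ‖bf x‖ ^ 2) ν₁ := by
      have := integrable_bar_sq (ρ := π'.map Prod.swap) hρ'2
      rwa [Measure.fst_map_swap, snd_def, hcπ'.2] at this
    have hJint : Integrable (fun x => ⟪w x, bf x⟫) ν₁ :=
      integrable_inner_of_sq hw2 hMb' hwmem.aestronglyMeasurable
        stronglyMeasurable_bar.aestronglyMeasurable
    have hsplit : ∫ x, ⟪w x, t • x - (t - 1) • bf x⟫ ∂ν₁
        = t * I - (t - 1) * ∫ x, ⟪w x, bf x⟫ ∂ν₁ := by
      have hpt : ∀ x : EucSp d, ⟪w x, t • x - (t - 1) • bf x⟫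
          = t * ⟪w x, x⟫ - (t - 1) * ⟪w x, bf x⟫ := by
        intro x
        rw [inner_sub_right, real_inner_smul_right, real_inner_smul_right]
      rw [integral_congr_ae (Filter.Eventually.of_forall hpt),
        integral_sub (hIint.const_mul t) (hJint.const_mul (t - 1)),
        integral_const_mul, integral_const_mul, ← hI]
    rw [hsplit] at hvw
    have hJle : ∫ x, ⟪w x, bf x⟫ ∂ν₁ ≤ (t * I - BV) / (t - 1) := by
      rw [le_div_iff₀ ht1]
      linarith
    have : ∫ x₁, ⟪w x₁, condBary π' hπ' x₁⟫ ∂ν₁ = ∫ x, ⟪w x, bf x⟫ ∂ν₁ := by rw [hcb]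
    rw [this]
    linarith
  -- combine
  refine ⟨μs, inferInstance, hμs2, ?_⟩
  have hFtle : Ft t ν₀ ν₁ μs ≤ (BV + M₁ - 2 * I) / (2 * (t - 1))
      - (BV + M₀ - 2 * ((t * I - BV) / (t - 1))) / (2 * t) := by
    rw [Ft]
    have hW1 : W2sq μs ν₁ ≤ BV + M₁ - 2 * I := by rw [← hC1]; exact hup
    have h1 : W2sq μs ν₁ / (2 * (t - 1)) ≤ (BV + M₁ - 2 * I) / (2 * (t - 1)) := by
      gcongr
    have h2 : (BV + M₀ - 2 * ((t * I - BV) / (t - 1))) / (2 * t) ≤ W2sq μs ν₀ / (2 * t) := by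
      gcongr
    linarith
  have hfinal : (BV + M₁ - 2 * I) / (2 * (t - 1))
      - (BV + M₀ - 2 * ((t * I - BV) / (t - 1))) / (2 * t)
      = -(1 / (2 * t * (t - 1))) * BV + (1 / (2 * (t - 1))) * M₁ - (1 / (2 * t)) * M₀ := by
    field_simp
    ring
  rw [hfinal] at hFtle
  exact hFtle

end Main

end Stmt13


/-- equivalence between problem `(P)` and the barycentric problem `(B)`. -/
theorem stmt_13 {d : ℕ} (hd : 1 ≤ d) {t : ℝ} (ht : 1 < t)
    (ν₀ ν₁ : Measure (EucSp d)) (h₀ : ν₀ ∈ P2 d) (h₁ : ν₁ ∈ P2 d) :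
    PVal t ν₀ ν₁ =
      -(1 / (2 * t * (t - 1))) * BVal t ν₀ ν₁
        + (1 / (2 * (t - 1))) * ∫ x, ‖x‖ ^ 2 ∂ν₁
        - (1 / (2 * t)) * ∫ x, ‖x‖ ^ 2 ∂ν₀ := by
  obtain ⟨hν₀p, h₀2⟩ := h₀
  obtain ⟨hν₁p, h₁2⟩ := h₁
  haveI := hν₀p
  haveI := hν₁p
  apply le_antisymm
  · obtain ⟨μs, hμsp, hμs2, hle⟩ := Stmt13.dir2 ht h₀2 h₁2
    refine le_trans (csInf_le ?_ ⟨μs, ⟨hμsp, hμs2⟩, rfl⟩) hle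
    refine ⟨-(1 / (2 * t * (t - 1))) * BVal t ν₀ ν₁
        + (1 / (2 * (t - 1))) * ∫ x, ‖x‖ ^ 2 ∂ν₁
        - (1 / (2 * t)) * ∫ x, ‖x‖ ^ 2 ∂ν₀, ?_⟩
    rintro r ⟨μ, ⟨hp, h2⟩, rfl⟩
    haveI := hp
    exact Stmt13.dir1 ht h₀2 h₁2 μ h2
  · refine le_csInf ⟨Ft t ν₀ ν₁ ν₁, ν₁, ⟨hν₁p, h₁2⟩, rfl⟩ ?_
    rintro r ⟨μ, ⟨hp, h2⟩, rfl⟩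
    haveI := hp
    exact Stmt13.dir1 ht h₀2 h₁2 μ h2
end
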